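/- arXiv:2106.05324 — 11 statements merged into one kernel-verified Lean document; each statement's English description precedes it below -/
import Mathlib

section
/- Let G be a simple graph that is 7-regular, has girth 5, and has diameter 2 (i.e., G is the Hoffman-Singleton graph). Then G is PRCF-bad: every proper edge coloring of G contains a rainbow cycle. -/
open SimpleGraph

/-- An edge coloring is proper if distinct incident edges (edges sharing a vertex)
receive distinct colors. -/
def IsProperEdgeColoring {V : Type u} {C : Type v} (G : SimpleGraph V) (φ : Sym2 V → C) : Prop :=
  ∀ ⦃e₁ e₂ : Sym2 V⦄, e₁ ∈ G.edgeSet → e₂ ∈ G.edgeSet → e₁ ≠ e₂ →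
    (∃ v, v ∈ e₁ ∧ v ∈ e₂) → φ e₁ ≠ φ e₂

/-!
Call a walk `a - b - c - d` without backtracking a 3-arc. When the girth is at least 5 and the
diameter at most 2, the ends `a` and `d` of a 3-arc have exactly one common neighbour `x`, so
every 3-arc closes up to a pentagon `a b c d x`, and `(a, b, c, d) ↦ (b, c, d, x)` is an injection
of the 3-arcs that runs through the five 3-arcs of this pentagon. If no cycle is rainbow, two
edges of each pentagon share a colour; being non-adjacent, they are the end edges of one of those
five 3-arcs. So at least a fifth of all 3-arcs are monochromatic (end edges of equal colour). But
when every degree is at least 7, each 2-arc extends to at least six 3-arcs and, the colouring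
being proper, to at most one monochromatic 3-arc, so at most a sixth of them are monochromatic.
-/

open Finset

lemma Finset.card_le_mul_card_of_forall_exists_iterate_mem {α : Type*} {f : α → α}
    {s t : Finset α} (hmaps : Set.MapsTo f s s) (hinj : Set.InjOn f s) (n : ℕ)
    (h : ∀ x ∈ s, ∃ i < n, f^[i] x ∈ t) : #s ≤ n * #t := by
  classical
  calc #s ≤ #((range n).biUnion fun i ↦ {x ∈ s | f^[i] x ∈ t}) := card_le_card fun x hx ↦ by
        obtain ⟨i, hi, hxt⟩ := h x hx
        simpa using ⟨i, hi, hx, hxt⟩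
    _ ≤ ∑ i ∈ range n, #{x ∈ s | f^[i] x ∈ t} := card_biUnion_le
    _ ≤ ∑ _i ∈ range n, #t := sum_le_sum fun i _ ↦
        card_le_card_of_injOn _ (fun x hx ↦ (mem_filter.mp hx).2)
          ((hinj.iterate hmaps i).mono fun x hx ↦ (mem_filter.mp hx).1)
    _ = n * #t := by simp

namespace SimpleGraph

variable {V : Type*} {G : SimpleGraph V} {a b c d : V}

lemma not_adj_of_three_lt_egirth (hg : 3 < G.egirth) (hab : G.Adj a b) (hbc : G.Adj b c) :
    ¬G.Adj c a := fun hca ↦ by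
  have hw : (Walk.cons hab (.cons hbc (.cons hca .nil))).IsCycle := by
    simp [Walk.cons_isCycle_iff, hab.ne, hab.ne', hbc.ne, hca.ne, hca.ne']
  exact (egirth_le_length hw).not_gt hg

lemma eq_of_four_lt_egirth (hg : 4 < G.egirth) (hab : G.Adj a b) (hbc : G.Adj b c)
    (hcd : G.Adj c d) (hda : G.Adj d a) (hbd : b ≠ d) : a = c := by
  by_contra hac
  have hw : (Walk.cons hab (.cons hbc (.cons hcd (.cons hda .nil)))).IsCycle := by
    simp [Walk.cons_isCycle_iff, hab.ne, hbc.ne, hcd.ne, hda.ne, hab.ne', hda.ne', hac, hbd,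
      Ne.symm hac]
  exact (egirth_le_length hw).not_gt hg

lemma commonNeighbors_nonempty_of_ediam_le_two (hd : G.ediam ≤ 2) (hne : a ≠ b)
    (hab : ¬G.Adj a b) : (G.commonNeighbors a b).Nonempty := by
  by_contra hempty
  exact (edist_le_ediam.trans hd).not_gt <|
    two_lt_edist_iff.mpr ⟨hne, hab, Set.not_nonempty_iff_eq_empty.mp hempty⟩

lemma commonNeighbors_subsingleton (hg : 4 < G.egirth) (hne : a ≠ b) :
    (G.commonNeighbors a b).Subsingleton := fun _ hx _ hy ↦ by
  rw [mem_commonNeighbors] at hx hy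
  exact eq_of_four_lt_egirth hg hx.1.symm hy.1 hy.2.symm hx.2 hne

open Classical in
variable (G) in
noncomputable def commonNeighbor (a b : V) : V :=
  if h : (G.commonNeighbors a b).Nonempty then h.some else a

lemma commonNeighbor_mem (h : (G.commonNeighbors a b).Nonempty) :
    G.commonNeighbor a b ∈ G.commonNeighbors a b := by
  rw [commonNeighbor, dif_pos h]
  exact h.some_mem

lemma commonNeighbor_eq (hg : 4 < G.egirth) (hne : a ≠ b) {x : V}
    (hx : x ∈ G.commonNeighbors a b) : G.commonNeighbor a b = x :=
  commonNeighbors_subsingleton hg hne (commonNeighbor_mem ⟨x, hx⟩) hx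

variable (G) in
noncomputable def rotateArc (q : V × V × V × V) : V × V × V × V :=
  (q.2.1, q.2.2.1, q.2.2.2, G.commonNeighbor q.1 q.2.2.2)

@[simp]
lemma rotateArc_apply : G.rotateArc (a, b, c, d) = (b, c, d, G.commonNeighbor a d) := rfl

lemma _root_.IsProperEdgeColoring.apply_ne {C : Type*} {φ : Sym2 V → C}
    (hφ : IsProperEdgeColoring G φ) (hab : G.Adj a b) (hbc : G.Adj b c) (hac : a ≠ c) :
    φ s(a, b) ≠ φ s(b, c) :=
  hφ hab hbc (by simp [hab.ne, hac]) ⟨b, by simp, by simp⟩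

lemma _root_.IsProperEdgeColoring.exists_opposite_eq_of_not_nodup {C : Type*}
    {φ : Sym2 V → C} (hφ : IsProperEdgeColoring G φ) {e : V} (hab : G.Adj a b)
    (hbc : G.Adj b c) (hcd : G.Adj c d) (hde : G.Adj d e) (hea : G.Adj e a) (hac : a ≠ c)
    (hbd : b ≠ d) (hce : c ≠ e) (hda : d ≠ a) (heb : e ≠ b)
    (hnd : ¬[φ s(a, b), φ s(b, c), φ s(c, d), φ s(d, e), φ s(e, a)].Nodup) :
    φ s(a, b) = φ s(c, d) ∨ φ s(b, c) = φ s(d, e) ∨ φ s(c, d) = φ s(e, a) ∨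
      φ s(d, e) = φ s(a, b) ∨ φ s(e, a) = φ s(b, c) := by
  have := hφ.apply_ne hab hbc hac
  have := hφ.apply_ne hbc hcd hbd
  have := hφ.apply_ne hcd hde hce
  have := hφ.apply_ne hde hea hda
  have := hφ.apply_ne hea hab heb
  simp only [List.nodup_cons, List.mem_cons, List.not_mem_nil, or_false, List.nodup_nil,
    and_true, not_or, not_and, not_not] at hnd
  tauto

section Arcs

variable [Fintype V] [DecidableEq V] [DecidableRel G.Adj]

variable (G) in
def twoArcs : Finset (V × V × V) :=
  {p | G.Adj p.1 p.2.1 ∧ G.Adj p.2.1 p.2.2 ∧ p.1 ≠ p.2.2}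

variable (G) in
def threeArcs : Finset (V × V × V × V) :=
  {q | G.Adj q.1 q.2.1 ∧ G.Adj q.2.1 q.2.2.1 ∧ G.Adj q.2.2.1 q.2.2.2 ∧
    q.1 ≠ q.2.2.1 ∧ q.2.1 ≠ q.2.2.2}

variable (G) in
def monochromaticThreeArcs {C : Type*} [DecidableEq C] (φ : Sym2 V → C) :
    Finset (V × V × V × V) :=
  {q ∈ G.threeArcs | φ s(q.1, q.2.1) = φ s(q.2.2.1, q.2.2.2)}

@[simp]
lemma mem_twoArcs : (a, b, c) ∈ G.twoArcs ↔ G.Adj a b ∧ G.Adj b c ∧ a ≠ c := by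
  simp [twoArcs]

@[simp]
lemma mem_threeArcs :
    (a, b, c, d) ∈ G.threeArcs ↔ G.Adj a b ∧ G.Adj b c ∧ G.Adj c d ∧ a ≠ c ∧ b ≠ d := by
  simp [threeArcs]

lemma twoArcs_nonempty [Nonempty V] (hdeg : ∀ v, 2 ≤ G.degree v) : G.twoArcs.Nonempty := by
  obtain ⟨a⟩ := ‹Nonempty V›
  obtain ⟨b, hab⟩ := (G.degree_pos_iff_exists_adj a).mp (by have := hdeg a; omega)
  obtain ⟨c, hc⟩ : ((G.neighborFinset b).erase a).Nonempty := by
    rw [← card_pos, card_erase_of_mem (by simpa using hab.symm), card_neighborFinset_eq_degree]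
    have := hdeg b
    omega
  rw [mem_erase, mem_neighborFinset] at hc
  exact ⟨(a, b, c), by simp [hab, hc.2, hc.1.symm]⟩

lemma mul_card_twoArcs_le_card_threeArcs {k : ℕ} (hdeg : ∀ v, k + 1 ≤ G.degree v) :
    k * #G.twoArcs ≤ #G.threeArcs := by
  refine mul_card_image_le_card_of_maps_to (f := fun q ↦ (q.1, q.2.1, q.2.2.1))
    (fun ⟨a, b, c, d⟩ hq ↦ by simp_all) k fun ⟨a, b, c⟩ hp ↦ ?_
  rw [mem_twoArcs] at hp
  calc k ≤ #((G.neighborFinset c).erase b) := by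
        rw [card_erase_of_mem (by simpa using hp.2.1.symm), card_neighborFinset_eq_degree]
        have := hdeg c
        omega
    _ = #(((G.neighborFinset c).erase b).image fun d ↦ (a, b, c, d)) :=
        (card_image_of_injective _ fun _ _ h ↦ by simpa using h).symm
    _ ≤ _ := card_le_card fun q hq ↦ by
        simp only [mem_image, mem_erase, mem_neighborFinset] at hq
        obtain ⟨d, ⟨hdb, hcd⟩, rfl⟩ := hq
        simp [hp.1, hp.2.1, hp.2.2, hcd, Ne.symm hdb]

lemma card_monochromaticThreeArcs_le {C : Type*} [DecidableEq C] {φ : Sym2 V → C}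
    (hφ : IsProperEdgeColoring G φ) : #(G.monochromaticThreeArcs φ) ≤ #G.twoArcs := by
  refine card_le_card_of_injOn (fun q ↦ (q.1, q.2.1, q.2.2.1))
    (fun ⟨a, b, c, d⟩ hq ↦ by simp_all [monochromaticThreeArcs]) ?_
  rintro ⟨a, b, c, d⟩ hq ⟨a', b', c', d'⟩ hq' h
  simp only [monochromaticThreeArcs, mem_coe, mem_filter, mem_threeArcs, Prod.mk.injEq] at hq hq' h
  obtain ⟨rfl, rfl, rfl⟩ := h
  suffices d = d' by rw [this]
  by_contra hdd
  refine hφ.apply_ne hq.1.2.2.1.symm hq'.1.2.2.1 hdd ?_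
  rw [Sym2.eq_swap, ← hq.2, hq'.2]

section Pentagon

variable (hg : 4 < G.egirth)
include hg

lemma ne_and_not_adj_of_mem_threeArcs (hq : (a, b, c, d) ∈ G.threeArcs) : a ≠ d ∧ ¬G.Adj a d := by
  rw [mem_threeArcs] at hq
  obtain ⟨hab, hbc, hcd, hac, hbd⟩ := hq
  refine ⟨?_, fun had ↦ hac (eq_of_four_lt_egirth hg hab hbc hcd had.symm hbd)⟩
  rintro rfl
  exact not_adj_of_three_lt_egirth (lt_trans (by norm_num) hg) hab hbc hcd

variable (hd : G.ediam ≤ 2)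
include hd

lemma adj_commonNeighbor_of_mem_threeArcs (hq : (a, b, c, d) ∈ G.threeArcs) :
    G.Adj a (G.commonNeighbor a d) ∧ G.Adj d (G.commonNeighbor a d) := by
  obtain ⟨had, hnad⟩ := ne_and_not_adj_of_mem_threeArcs hg hq
  exact commonNeighbor_mem (commonNeighbors_nonempty_of_ediam_le_two hd had hnad)

lemma ne_commonNeighbor_of_mem_threeArcs (hq : (a, b, c, d) ∈ G.threeArcs) :
    b ≠ G.commonNeighbor a d ∧ c ≠ G.commonNeighbor a d := by
  have hx := adj_commonNeighbor_of_mem_threeArcs hg hd hq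
  rw [mem_threeArcs] at hq
  have hg3 : 3 < G.egirth := lt_trans (by norm_num) hg
  constructor <;> intro h <;> rw [← h] at hx
  · exact not_adj_of_three_lt_egirth hg3 hq.2.1 hq.2.2.1 hx.2
  · exact not_adj_of_three_lt_egirth hg3 hq.1 hq.2.1 hx.1.symm

lemma rotateArc_mem_threeArcs (hq : (a, b, c, d) ∈ G.threeArcs) :
    G.rotateArc (a, b, c, d) ∈ G.threeArcs := by
  have hx := adj_commonNeighbor_of_mem_threeArcs hg hd hq
  have hne := ne_commonNeighbor_of_mem_threeArcs hg hd hq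
  rw [mem_threeArcs] at hq
  simp [hq.2.1, hq.2.2.1, hq.2.2.2.2, hx.2, hne.2]

lemma commonNeighbor_commonNeighbor (hq : (a, b, c, d) ∈ G.threeArcs) :
    G.commonNeighbor b (G.commonNeighbor a d) = a := by
  have hx := adj_commonNeighbor_of_mem_threeArcs hg hd hq
  refine commonNeighbor_eq hg (ne_commonNeighbor_of_mem_threeArcs hg hd hq).1 ?_
  rw [mem_threeArcs] at hq
  exact ⟨hq.1.symm, hx.1.symm⟩

lemma mapsTo_rotateArc : Set.MapsTo G.rotateArc G.threeArcs G.threeArcs :=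
  fun ⟨_, _, _, _⟩ hq ↦ rotateArc_mem_threeArcs hg hd hq

lemma injOn_rotateArc : Set.InjOn G.rotateArc G.threeArcs := by
  rintro ⟨a, b, c, d⟩ hq ⟨a', b', c', d'⟩ hq' h
  have ha := commonNeighbor_commonNeighbor hg hd hq
  have ha' := commonNeighbor_commonNeighbor hg hd hq'
  simp only [rotateArc_apply, Prod.mk.injEq] at h
  obtain ⟨rfl, rfl, rfl, hx⟩ := h
  rw [← ha, ← ha', hx]

lemma exists_isCycle_edges_eq_pentagon (hq : (a, b, c, d) ∈ G.threeArcs) :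
    ∃ w : G.Walk a a, w.IsCycle ∧ w.edges =
      [s(a, b), s(b, c), s(c, d), s(d, G.commonNeighbor a d), s(G.commonNeighbor a d, a)] := by
  have hx := adj_commonNeighbor_of_mem_threeArcs hg hd hq
  have hne := ne_commonNeighbor_of_mem_threeArcs hg hd hq
  have had := (ne_and_not_adj_of_mem_threeArcs hg hq).1
  rw [mem_threeArcs] at hq
  obtain ⟨hab, hbc, hcd, hac, hbd⟩ := hq
  refine ⟨.cons hab (.cons hbc (.cons hcd (.cons hx.2 (.cons hx.1.symm .nil)))), ?_, rfl⟩
  simp [Walk.cons_isCycle_iff, hab.ne, hbc.ne, hcd.ne, hx.1.ne, hx.2.ne, hab.ne', hx.1.ne',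
    hac, hbd, had, hne.1, hne.2, Ne.symm hac, Ne.symm had]

lemma rotateArc_iterate_of_mem_threeArcs (hq : (a, b, c, d) ∈ G.threeArcs) :
    G.rotateArc^[2] (a, b, c, d) = (c, d, G.commonNeighbor a d, a) ∧
      G.rotateArc^[3] (a, b, c, d) = (d, G.commonNeighbor a d, a, b) ∧
      G.rotateArc^[4] (a, b, c, d) = (G.commonNeighbor a d, a, b, c) := by
  have hq₁ := rotateArc_mem_threeArcs hg hd hq
  have hq₂ := rotateArc_mem_threeArcs hg hd hq₁
  have ha := commonNeighbor_commonNeighbor hg hd hq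
  have hb := commonNeighbor_commonNeighbor hg hd hq₁
  have hc := commonNeighbor_commonNeighbor hg hd hq₂
  simp only [rotateArc_apply, ha] at hb hq₂ hc
  simp only [hb] at hc
  simp [ha, hb, hc]

lemma exists_iterate_rotateArc_mem_monochromaticThreeArcs {C : Type*} [DecidableEq C]
    {φ : Sym2 V → C} (hφ : IsProperEdgeColoring G φ)
    (hnr : ∀ (u : V) (w : G.Walk u u), w.IsCycle → ¬(w.edges.map φ).Nodup)
    {q : V × V × V × V} (hq : q ∈ G.threeArcs) :
    ∃ i < 5, G.rotateArc^[i] q ∈ G.monochromaticThreeArcs φ := by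
  obtain ⟨a, b, c, d⟩ := q
  obtain ⟨w, hw, hedges⟩ := exists_isCycle_edges_eq_pentagon hg hd hq
  have hnd := hnr a w hw
  rw [hedges] at hnd
  have hx := adj_commonNeighbor_of_mem_threeArcs hg hd hq
  have hne := ne_commonNeighbor_of_mem_threeArcs hg hd hq
  have had := (ne_and_not_adj_of_mem_threeArcs hg hq).1
  obtain ⟨hab, hbc, hcd, hac, hbd⟩ := mem_threeArcs.mp hq
  have hmem (i : ℕ) : G.rotateArc^[i] (a, b, c, d) ∈ G.threeArcs :=
    (mapsTo_rotateArc hg hd).iterate i hq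
  obtain ⟨h₂, h₃, h₄⟩ := rotateArc_iterate_of_mem_threeArcs hg hd hq
  rcases hφ.exists_opposite_eq_of_not_nodup hab hbc hcd hx.2 hx.1.symm hac hbd hne.2
    (Ne.symm had) (Ne.symm hne.1) (by simpa using hnd) with h | h | h | h | h
  · exact ⟨0, by norm_num, mem_filter.mpr ⟨hmem 0, h⟩⟩
  · exact ⟨1, by norm_num, mem_filter.mpr ⟨hmem 1, h⟩⟩
  · exact ⟨2, by norm_num, mem_filter.mpr ⟨hmem 2, by simpa [h₂] using h⟩⟩
  · exact ⟨3, by norm_num, mem_filter.mpr ⟨hmem 3, by simpa [h₃] using h⟩⟩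
  · exact ⟨4, by norm_num, mem_filter.mpr ⟨hmem 4, by simpa [h₄] using h⟩⟩

end Pentagon

end Arcs

theorem exists_rainbow_cycle_of_four_lt_egirth_of_ediam_le_two [Fintype V] [Nonempty V]
    [DecidableRel G.Adj] (hdeg : ∀ v, 7 ≤ G.degree v)
    (hg : 4 < G.egirth) (hd : G.ediam ≤ 2) {C : Type*} (φ : Sym2 V → C)
    (hφ : IsProperEdgeColoring G φ) :
    ∃ (u : V) (c : G.Walk u u), c.IsCycle ∧ (c.edges.map φ).Nodup := by
  classical
  by_contra! hnr
  have hT := twoArcs_nonempty fun v ↦ (hdeg v).trans' (by norm_num : 2 ≤ 7)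
  have h₁ := mul_card_twoArcs_le_card_threeArcs (k := 6) hdeg
  have h₂ := card_le_mul_card_of_forall_exists_iterate_mem (mapsTo_rotateArc hg hd)
    (injOn_rotateArc hg hd) 5 fun _ hq ↦
      exists_iterate_rotateArc_mem_monochromaticThreeArcs hg hd hφ hnr hq
  have h₃ := card_monochromaticThreeArcs_le hφ
  have := hT.card_pos
  omega

end SimpleGraph

/-- The Hoffman-Singleton graph (a 7-regular graph of girth 5 and diameter 2) is
PRCF-bad: every proper edge coloring contains a rainbow cycle. -/
theorem hoffmanSingleton_PRCF_bad {V : Type u} [Fintype V] (G : SimpleGraph V)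
    [DecidableRel G.Adj]
    (hreg : G.IsRegularOfDegree 7) (hgirth : G.girth = 5) (hdiam : G.diam = 2) :
    ∀ {C : Type v} (φ : Sym2 V → C), IsProperEdgeColoring G φ →
      ∃ (u : V) (c : G.Walk u u), c.IsCycle ∧ (c.edges.map φ).Nodup := by
  have : Nontrivial V := nontrivial_of_diam_ne_zero (G := G) (by simp [hdiam])
  have hg : G.egirth = 5 := (ENat.toNat_eq_iff_eq_natCast _ 5).mp hgirth
  have hd : G.ediam = 2 := (ENat.toNat_eq_iff_eq_natCast _ 2).mp hdiam
  intro C φ hφ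
  exact exists_rainbow_cycle_of_four_lt_egirth_of_ediam_le_two (fun v ↦ (hreg v).ge)
    (by rw [hg]; norm_num) hd.le φ hφ
end

section
/- Let G be a simple graph with girth 5 and diameter 2. Then every path in G with 4 vertices (a path of length 3) is a subgraph of exactly one 5-cycle of G. -/
/-!
Write the path as a v w b. Girth 5 forbids triangles and 4-cycles, so a and b are not adjacent,
diameter 2 gives them a common neighbour x, which is unique and differs from v and w; hence
a v w b x is a 5-cycle. Conversely, every vertex of a cycle has exactly two neighbours on it, so
on a 5-cycle through the path the second neighbours of a and of b are both the fifth vertex, a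
common neighbour of a and b, that is, x.
-/

open SimpleGraph

namespace SimpleGraph

variable {V : Type*} {G : SimpleGraph V}

lemma not_adj_of_three_lt_egirth_s1 (h : 3 < G.egirth) {x y z : V}
    (hxy : G.Adj x y) (hyz : G.Adj y z) : ¬ G.Adj z x := fun hzx => by
  have hc : (Walk.cons hxy (.cons hyz (.cons hzx .nil))).IsCycle := by
    simp [Walk.cons_isCycle_iff, hxy.ne, hyz.ne, hzx.ne, hzx.ne', hxy.ne']
  simpa using h.trans_le (egirth_le_length hc)

lemma not_adj_of_four_lt_egirth (h : 4 < G.egirth) {w x y z : V} (hwy : w ≠ y) (hxz : x ≠ z)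
    (hwx : G.Adj w x) (hxy : G.Adj x y) (hyz : G.Adj y z) : ¬ G.Adj z w := fun hzw => by
  have hc : (Walk.cons hwx (.cons hxy (.cons hyz (.cons hzw .nil)))).IsCycle := by
    simp [Walk.cons_isCycle_iff, hwx.ne, hwx.ne', hxy.ne, hyz.ne, hzw.ne, hzw.ne', hwy, hwy.symm,
      hxz]
  simpa using h.trans_le (egirth_le_length hc)

lemma eq_of_mem_commonNeighbors_of_four_lt_egirth (h : 4 < G.egirth) {u v x y : V}
    (huv : u ≠ v) (hx : x ∈ G.commonNeighbors u v) (hy : y ∈ G.commonNeighbors u v) : x = y := by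
  by_contra hxy
  exact not_adj_of_four_lt_egirth h huv hxy hx.1 hx.2.symm hy.2 hy.1.symm

lemma commonNeighbors_nonempty_of_ediam_le_two_s1 (h : G.ediam ≤ 2) {u v : V} (hne : u ≠ v)
    (hadj : ¬ G.Adj u v) : (G.commonNeighbors u v).Nonempty := by
  by_contra hempty
  have : 2 < G.edist u v :=
    two_lt_edist_iff.mpr ⟨hne, hadj, Set.not_nonempty_iff_eq_empty.mp hempty⟩
  exact (this.trans_le (edist_le_ediam.trans h)).false

lemma Walk.exists_eq_cons_cons_cons_of_length_eq_three {a b : V} (p : G.Walk a b)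
    (h : p.length = 3) : ∃ (u v : V) (hau : G.Adj a u) (huv : G.Adj u v) (hvb : G.Adj v b),
      p = .cons hau (.cons huv (.cons hvb .nil)) :=
  match p, h with
  | .cons _ (.cons _ (.cons _ .nil)), _ => ⟨_, _, _, _, _, rfl⟩

namespace Walk.IsCycle

variable {u : V} {c : G.Walk u u}

lemma card_support_toFinset [DecidableEq V] (hc : c.IsCycle) :
    c.support.toFinset.card = c.length := by
  rw [← c.cons_tail_support, List.toFinset_cons,
    Finset.insert_eq_of_mem (List.mem_toFinset.mpr (end_mem_tail_support hc.not_nil)),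
    List.toFinset_card_of_nodup hc.support_nodup, List.length_tail, length_support,
    Nat.add_sub_cancel]

lemma eq_or_eq_of_mem_edges (hc : c.IsCycle) {v w w₁ w₂ : V} (h₁ : s(v, w₁) ∈ c.edges)
    (h₂ : s(v, w₂) ∈ c.edges) (hne : w₁ ≠ w₂) (h : s(v, w) ∈ c.edges) : w = w₁ ∨ w = w₂ := by
  have hpair : {w₁, w₂} = c.toSubgraph.neighborSet v := by
    refine Set.eq_of_subset_of_ncard_le ?_ ?_ (c.finite_neighborSet_toSubgraph)
    · simp [Set.insert_subset_iff, adj_toSubgraph_iff_mem_edges, h₁, h₂]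
    · rw [hc.ncard_neighborSet_toSubgraph_eq_two (c.fst_mem_support_of_mem_edges h),
        Set.ncard_pair hne]
  have : w ∈ c.toSubgraph.neighborSet v := adj_toSubgraph_iff_mem_edges.mpr h
  simpa [← hpair] using this

lemma exists_ne_mem_edges (hc : c.IsCycle) {v w : V} (h : s(v, w) ∈ c.edges) :
    ∃ w', w' ≠ w ∧ s(v, w') ∈ c.edges := by
  obtain ⟨w', hw', hne⟩ := Set.exists_ne_of_one_lt_ncard
    (by rw [hc.ncard_neighborSet_toSubgraph_eq_two (c.fst_mem_support_of_mem_edges h)]; norm_num)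
    w
  exact ⟨w', hne, adj_toSubgraph_iff_mem_edges.mp hw'⟩

lemma edges_toFinset_eq_of_length_eq_five [DecidableEq V] (hc : c.IsCycle) (h5 : c.length = 5)
    {a v w b : V} (haw : a ≠ w) (hvb : v ≠ b) (hab : a ≠ b) (hav_mem : s(a, v) ∈ c.edges)
    (hvw_mem : s(v, w) ∈ c.edges) (hwb_mem : s(w, b) ∈ c.edges) (hab_mem : s(a, b) ∉ c.edges) :
    ∃ x ∈ G.commonNeighbors a b,
      c.edges.toFinset = {s(a, v), s(v, w), s(w, b), s(b, x), s(x, a)} := by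
  have hne {x y : V} (h : s(x, y) ∈ c.edges) : x ≠ y := (c.adj_of_mem_edges h).ne
  have hsupp {x y : V} (h : s(x, y) ∈ c.edges) : x ∈ c.support :=
    c.fst_mem_support_of_mem_edges h
  obtain ⟨x, hxv, hax_mem⟩ := hc.exists_ne_mem_edges hav_mem
  obtain ⟨y, hyw, hby_mem⟩ := hc.exists_ne_mem_edges (Sym2.eq_swap ▸ hwb_mem)
  have hxb : x ≠ b := by rintro rfl; exact hab_mem hax_mem
  have hya : y ≠ a := by rintro rfl; exact hab_mem (Sym2.eq_swap ▸ hby_mem)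
  have hxw : x ≠ w := by
    rintro rfl
    rcases hc.eq_or_eq_of_mem_edges (Sym2.eq_swap ▸ hvw_mem) hwb_mem hvb
      (Sym2.eq_swap ▸ hax_mem) with h | h
    exacts [hne hav_mem h, hab h]
  have hyv : y ≠ v := by
    rintro rfl
    rcases hc.eq_or_eq_of_mem_edges (Sym2.eq_swap ▸ hav_mem) hvw_mem haw
      (Sym2.eq_swap ▸ hby_mem) with h | h
    exacts [hab h.symm, hne hwb_mem h.symm]
  -- otherwise a, v, w, b, x, y would be six distinct vertices of a 5-cycle
  obtain rfl : x = y := by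
    by_contra hxy
    have hsub : {a, v, w, b, x, y} ⊆ c.support.toFinset := by
      simp [Finset.insert_subset_iff, hsupp hav_mem, hsupp hvw_mem, hsupp hwb_mem,
        hsupp hby_mem, hsupp (Sym2.eq_swap ▸ hax_mem), hsupp (Sym2.eq_swap ▸ hby_mem)]
    have h6 : ({a, v, w, b, x, y} : Finset V).card = 6 := by
      simp [Finset.card_insert_of_notMem, hne hav_mem, hne hvw_mem, hne hwb_mem, hne hax_mem,
        hne hby_mem, haw, hvb, hab, hxv.symm, hxw.symm, hxb.symm, hya.symm, hyv.symm, hyw.symm,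
        hxy]
    have := Finset.card_le_card hsub
    rw [hc.card_support_toFinset, h5, h6] at this
    omega
  refine ⟨x, G.mem_commonNeighbors.mpr ⟨c.adj_of_mem_edges hax_mem, c.adj_of_mem_edges hby_mem⟩,
    (Finset.eq_of_subset_of_card_le ?_ ?_).symm⟩
  · simp [Finset.insert_subset_iff, hav_mem, hvw_mem, hwb_mem, hby_mem, Sym2.eq_swap ▸ hax_mem]
  · rw [List.toFinset_card_of_nodup hc.edges_nodup, length_edges, h5]
    simp [Finset.card_insert_of_notMem, hne hav_mem, hne hvw_mem,
      hne hwb_mem, hne hax_mem, haw, hvb, hab.symm, hxv.symm, hxw.symm, hxb.symm]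

end Walk.IsCycle

end SimpleGraph

/-- Cycles are counted by their edge sets, so rotations and reversals of a closed walk count
once. -/
theorem path_length_three_in_unique_five_cycle {V : Type u} [DecidableEq V]
    (G : SimpleGraph V) (hgirth : G.girth = 5) (hdiam : G.diam = 2)
    {a b : V} (p : G.Walk a b) (hp : p.IsPath) (hlen : p.length = 3) :
    ∃! s : Finset (Sym2 V),
      (∃ (w : V) (c : G.Walk w w), c.IsCycle ∧ c.length = 5 ∧ c.edges.toFinset = s) ∧
      p.edges.toFinset ⊆ s := by
  obtain ⟨v, w, hav, hvw, hwb, rfl⟩ := p.exists_eq_cons_cons_cons_of_length_eq_three hlen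
  obtain ⟨⟨-, haw, hab⟩, ⟨-, hvb⟩, -⟩ : (a ≠ v ∧ a ≠ w ∧ a ≠ b) ∧ (v ≠ w ∧ v ≠ b) ∧ w ≠ b := by
    simpa using hp.support_nodup
  have h4 : 4 < G.egirth := by rw [(ENat.toNat_eq_iff (by norm_num)).mp hgirth]; norm_num
  have h3 : 3 < G.egirth := lt_trans (by norm_num) h4
  have hnab : ¬ G.Adj a b := fun h => not_adj_of_four_lt_egirth h4 haw hvb hav hvw hwb h.symm
  obtain ⟨x, hx⟩ := commonNeighbors_nonempty_of_ediam_le_two_s1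
    ((ENat.toNat_eq_iff two_ne_zero).mp hdiam).le hab hnab
  obtain ⟨hax, hbx⟩ := G.mem_commonNeighbors.mp hx
  have hxv : x ≠ v := fun h => not_adj_of_three_lt_egirth_s1 h3 hvw hwb (h ▸ hbx)
  have hxw : x ≠ w := fun h => not_adj_of_three_lt_egirth_s1 h3 hav hvw (h ▸ hax).symm
  refine ⟨{s(a, v), s(v, w), s(w, b), s(b, x), s(x, a)},
    ⟨⟨a, .cons hav (.cons hvw (.cons hwb (.cons hbx (.cons hax.symm .nil)))), ?_, rfl, by simp⟩,
      by simp [Finset.insert_subset_iff]⟩, ?_⟩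
  · simp [Walk.cons_isCycle_iff, hav.ne', hvw.ne, hwb.ne, hbx.ne, hax.ne', hab.symm, haw,
      haw.symm, hvb, hxv.symm, hxw.symm]
  · rintro s ⟨⟨u, c, hc, hc5, rfl⟩, hsub⟩
    obtain ⟨y, hy, hc⟩ := hc.edges_toFinset_eq_of_length_eq_five hc5 haw hvb hab
      (List.mem_toFinset.mp (hsub (by simp))) (List.mem_toFinset.mp (hsub (by simp)))
      (List.mem_toFinset.mp (hsub (by simp))) (fun h => hnab (c.adj_of_mem_edges h))
    rw [hc, eq_of_mem_commonNeighbors_of_four_lt_egirth h4 hab hy hx]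
end

section
/- Let G be a simple graph with girth 5 and diameter 2, and let φ be a proper edge coloring of G such that no 5-cycle of G is rainbow. Let S be the set of all paths of length 3 (P4's) in G and let T ⊆ S be the set of those paths whose three edges receive only two colors under φ (the non-rainbow P4's). Then |T| ≥ |S|/5. -/
open SimpleGraph

namespace NRP4Aux

set_option linter.unusedSectionVars false

variable {V : Type u} [DecidableEq V] {G : SimpleGraph V}

/-- The edge set of the path a-b-c-d. -/
def pf (a b c d : V) : Finset (Sym2 V) := {s(a,b), s(b,c), s(c,d)}

/-- a-b-c-d-e is a 5-cycle. -/
def C5 (G : SimpleGraph V) (a b c d e : V) : Prop :=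
  G.Adj a b ∧ G.Adj b c ∧ G.Adj c d ∧ G.Adj d e ∧ G.Adj e a ∧
  a ≠ c ∧ a ≠ d ∧ b ≠ d ∧ b ≠ e ∧ c ≠ e

lemma C5.rot {a b c d e : V} (h : C5 G a b c d e) : C5 G b c d e a := by
  obtain ⟨h1,h2,h3,h4,h5,n1,n2,n3,n4,n5⟩ := h
  exact ⟨h2,h3,h4,h5,h1,n3,n4,n5,n1.symm,n2.symm⟩

lemma triple_comm {α : Type*} [DecidableEq α] (x y z : α) :
    ({x,y,z} : Finset α) = {z,y,x} := by
  ext e; simp only [Finset.mem_insert, Finset.mem_singleton]; tauto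

lemma pf_rev (a b c d : V) : pf a b c d = pf d c b a := by
  unfold pf
  rw [show (s(d,c) : Sym2 V) = s(c,d) from Sym2.eq_swap,
      show (s(c,b) : Sym2 V) = s(b,c) from Sym2.eq_swap,
      show (s(b,a) : Sym2 V) = s(a,b) from Sym2.eq_swap, triple_comm]

lemma pf_eq {a b c d x y z w : V}
    (h1 : a ≠ b) (h2 : a ≠ c) (h3 : a ≠ d) (h4 : b ≠ c) (h5 : b ≠ d) (h6 : c ≠ d)
    (k1 : x ≠ y) (k2 : x ≠ z) (k3 : x ≠ w) (k4 : y ≠ z) (k5 : y ≠ w) (k6 : z ≠ w)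
    (h : pf a b c d = pf x y z w) :
    (a = x ∧ b = y ∧ c = z ∧ d = w) ∨ (a = w ∧ b = z ∧ c = y ∧ d = x) := by
  unfold pf at h
  have m1 : (s(x,y) : Sym2 V) ∈ ({s(a,b),s(b,c),s(c,d)} : Finset (Sym2 V)) := by
    rw [h]; simp
  have m2 : (s(y,z) : Sym2 V) ∈ ({s(a,b),s(b,c),s(c,d)} : Finset (Sym2 V)) := by
    rw [h]; simp
  have m3 : (s(z,w) : Sym2 V) ∈ ({s(a,b),s(b,c),s(c,d)} : Finset (Sym2 V)) := by
    rw [h]; simp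
  have m4 : (s(a,b) : Sym2 V) ∈ ({s(x,y),s(y,z),s(z,w)} : Finset (Sym2 V)) := by
    rw [← h]; simp
  have m6 : (s(c,d) : Sym2 V) ∈ ({s(x,y),s(y,z),s(z,w)} : Finset (Sym2 V)) := by
    rw [← h]; simp
  simp only [Finset.mem_insert, Finset.mem_singleton, Sym2.eq_iff] at m1 m2 m3 m4 m6
  rcases m1 with (⟨rfl,rfl⟩|⟨rfl,rfl⟩)|(⟨rfl,rfl⟩|⟨rfl,rfl⟩)|(⟨rfl,rfl⟩|⟨rfl,rfl⟩) <;>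
  rcases m2 with (⟨e1,e2⟩|⟨e1,e2⟩)|(⟨e1,e2⟩|⟨e1,e2⟩)|(⟨e1,e2⟩|⟨e1,e2⟩) <;>
  rcases m3 with (⟨f1,f2⟩|⟨f1,f2⟩)|(⟨f1,f2⟩|⟨f1,f2⟩)|(⟨f1,f2⟩|⟨f1,f2⟩) <;>
    subst_vars <;> tauto

lemma g3 (hG5 : ∀ ⦃a : V⦄ (w : G.Walk a a), w.IsCycle → 5 ≤ w.length)
    {a b c : V} (hab : G.Adj a b) (hbc : G.Adj b c) (hca : G.Adj c a) : False := by
  have hac := hca.ne'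
  have h1 := hab.ne; have h2 := hbc.ne
  let w : G.Walk a a := .cons hab (.cons hbc (.cons hca .nil))
  have hcyc : w.IsCycle := by
    simp only [w, Walk.isCycle_def, Walk.isTrail_def, Walk.edges_cons, Walk.edges_nil,
      Walk.support_cons, Walk.support_nil, List.tail_cons, List.nodup_cons, List.mem_cons,
      List.not_mem_nil, List.nodup_nil, Sym2.eq_iff, ne_eq]
    tauto
  have := hG5 w hcyc
  simp [w] at this

lemma g4 (hG5 : ∀ ⦃a : V⦄ (w : G.Walk a a), w.IsCycle → 5 ≤ w.length)
    {a b c d : V} (hab : G.Adj a b) (hbc : G.Adj b c) (hcd : G.Adj c d) (hda : G.Adj d a)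
    (hac : a ≠ c) (hbd : b ≠ d) : False := by
  have h1 := hab.ne; have h2 := hbc.ne; have h3 := hcd.ne; have h4 := hda.ne'
  let w : G.Walk a a := .cons hab (.cons hbc (.cons hcd (.cons hda .nil)))
  have hcyc : w.IsCycle := by
    simp only [w, Walk.isCycle_def, Walk.isTrail_def, Walk.edges_cons, Walk.edges_nil,
      Walk.support_cons, Walk.support_nil, List.tail_cons, List.nodup_cons, List.mem_cons,
      List.not_mem_nil, List.nodup_nil, Sym2.eq_iff, ne_eq]
    tauto
  have := hG5 w hcyc
  simp [w] at this

/-- Uniqueness of common neighbours in a graph without 3- and 4-cycles. -/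
lemma cn_unique (hG5 : ∀ ⦃a : V⦄ (w : G.Walk a a), w.IsCycle → 5 ≤ w.length)
    {x w u m : V} (hxw : x ≠ w) (h1 : G.Adj x u) (h2 : G.Adj u w)
    (h3 : G.Adj w m) (h4 : G.Adj m x) : u = m := by
  by_contra hum
  exact g4 hG5 h1 h2 h3 h4 hxw hum

lemma diam2 (hdiam : G.diam = 2) {a d : V} (hne : a ≠ d) (hnadj : ¬ G.Adj a d) :
    ∃ e, G.Adj a e ∧ G.Adj e d := by
  have htop : G.ediam ≠ ⊤ := by
    intro h
    rw [SimpleGraph.diam, h] at hdiam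
    simp at hdiam
  have hd2 : G.dist a d ≤ 2 := hdiam ▸ dist_le_diam htop
  have hreach : G.Reachable a d := by
    by_contra h
    have : G.edist a d = ⊤ := edist_eq_top_of_not_reachable h
    exact htop (eq_top_iff.mpr (this ▸ edist_le_ediam))
  have hpos : 0 < G.dist a d := hreach.pos_dist_of_ne hne
  have hne1 : G.dist a d ≠ 1 := fun h => hnadj (dist_eq_one_iff_adj.mp h)
  have h2 : G.dist a d = 2 := by omega
  obtain ⟨p, hp⟩ := hreach.exists_walk_length_eq_dist
  rw [h2] at hp
  cases p with
  | nil => simp at hp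
  | cons h q =>
    cases q with
    | nil => simp at hp
    | cons h' q' =>
      cases q' with
      | nil => exact ⟨_, h, h'⟩
      | cons h'' q'' => simp [Walk.length_cons] at hp

lemma cycle5 {a b c d e : V} (hab : G.Adj a b) (hbc : G.Adj b c) (hcd : G.Adj c d)
    (hde : G.Adj d e) (hea : G.Adj e a)
    (nac : a ≠ c) (nad : a ≠ d) (nbd : b ≠ d) (nbe : b ≠ e) (nce : c ≠ e) :
    ∃ w : G.Walk a a, w.IsCycle ∧ w.length = 5 ∧
      w.edges = [s(a,b), s(b,c), s(c,d), s(d,e), s(e,a)] := by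
  refine ⟨.cons hab (.cons hbc (.cons hcd (.cons hde (.cons hea .nil)))), ?_, by simp, by simp⟩
  have := hab.ne; have := hbc.ne; have := hcd.ne; have := hde.ne; have := hea.ne'
  simp only [Walk.isCycle_def, Walk.isTrail_def, Walk.edges_cons, Walk.edges_nil,
    Walk.support_cons, Walk.support_nil, List.tail_cons, List.nodup_cons, List.mem_cons,
    List.not_mem_nil, List.nodup_nil, Sym2.eq_iff, ne_eq]
  refine ⟨?_, by simp, ?_⟩ <;> tauto

lemma mem_S {s : Finset (Sym2 V)} :
    (∃ (u v : V) (p : G.Walk u v), p.IsPath ∧ p.length = 3 ∧ p.edges.toFinset = s) ↔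
    ∃ a b c d : V, G.Adj a b ∧ G.Adj b c ∧ G.Adj c d ∧ a ≠ b ∧ a ≠ c ∧ a ≠ d ∧ b ≠ c ∧
      b ≠ d ∧ c ≠ d ∧ s = pf a b c d := by
  constructor
  · rintro ⟨u, v, p, hp, hlen, hs⟩
    cases p with
    | nil => simp at hlen
    | cons h1 q =>
      rename_i b
      cases q with
      | nil => simp at hlen
      | cons h2 q2 =>
        rename_i c
        cases q2 with
        | nil => simp at hlen
        | cons h3 q3 =>
          cases q3 with
          | nil =>
            refine ⟨u, b, c, v, h1, h2, h3, ?_⟩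
            have hsup := hp.support_nodup
            simp only [Walk.support_cons, Walk.support_nil, List.nodup_cons, List.mem_cons,
              List.not_mem_nil, List.nodup_nil] at hsup
            have hfs : s = pf u b c v := by
              rw [← hs]
              simp only [Walk.edges_cons, Walk.edges_nil, List.toFinset_cons, List.toFinset_nil]
              rfl
            tauto
          | cons h4 q4 => simp [Walk.length_cons] at hlen
  · rintro ⟨a, b, c, d, hab, hbc, hcd, n1, n2, n3, n4, n5, n6, rfl⟩
    refine ⟨a, d, .cons hab (.cons hbc (.cons hcd .nil)), ?_, by simp, ?_⟩
    · simp only [Walk.isPath_def, Walk.support_cons, Walk.support_nil, List.nodup_cons,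
        List.mem_cons, List.not_mem_nil, List.nodup_nil]
      tauto
    · simp only [Walk.edges_cons, Walk.edges_nil, List.toFinset_cons, List.toFinset_nil]
      rfl

variable {C : Type v} {φ : Sym2 V → C}

lemma prop_ne (hproper : IsProperEdgeColoring G φ) {p q r : V}
    (h1 : G.Adj p q) (h2 : G.Adj q r) (hpr : p ≠ r) : φ s(p,q) ≠ φ s(q,r) := by
  apply hproper ((G.mem_edgeSet).mpr h1) ((G.mem_edgeSet).mpr h2)
  · rw [ne_eq, Sym2.eq_iff]
    push_neg
    exact ⟨fun hpq => absurd hpq h1.ne, fun hpr' => absurd hpr' hpr⟩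
  · exact ⟨q, by simp, by simp⟩

lemma keyA (hG5 : ∀ ⦃a : V⦄ (w : G.Walk a a), w.IsCycle → 5 ≤ w.length)
    (hdiam : G.diam = 2) (hproper : IsProperEdgeColoring G φ)
    (hno5 : ∀ (u : V) (c : G.Walk u u), c.IsCycle → c.length = 5 →
      ¬ (c.edges.map φ).Nodup)
    {a b c d : V} (hab : G.Adj a b) (hbc : G.Adj b c) (hcd : G.Adj c d)
    (nac : a ≠ c) (nad : a ≠ d) (nbd : b ≠ d)
    (r13 : φ s(a,b) ≠ φ s(c,d)) :
    ∃ e, C5 G a b c d e ∧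
      (φ s(a,b) = φ s(d,e) ∨ φ s(b,c) = φ s(d,e) ∨
       φ s(b,c) = φ s(e,a) ∨ φ s(c,d) = φ s(e,a)) := by
  have hnac : ¬ G.Adj a c := fun h => g3 hG5 hab hbc h.symm
  have hnbd : ¬ G.Adj b d := fun h => g3 hG5 hbc hcd h.symm
  have hnadj : ¬ G.Adj a d := fun h => g4 hG5 hab hbc hcd h.symm nac nbd
  obtain ⟨e, hae, hed⟩ := diam2 hdiam nad hnadj
  have nbe : b ≠ e := fun h => hnbd (by rw [h]; exact hed)
  have nce : c ≠ e := fun h => hnac (by rw [h]; exact hae)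
  have hde : G.Adj d e := hed.symm
  have hea : G.Adj e a := hae.symm
  obtain ⟨w, hcyc, hlen, hedges⟩ := cycle5 hab hbc hcd hde hea nac nad nbd nbe nce
  have hnd := hno5 a w hcyc hlen
  rw [hedges] at hnd
  refine ⟨e, ⟨hab, hbc, hcd, hde, hea, nac, nad, nbd, nbe, nce⟩, ?_⟩
  have p12 : φ s(a,b) ≠ φ s(b,c) := prop_ne hproper hab hbc nac
  have p23 : φ s(b,c) ≠ φ s(c,d) := prop_ne hproper hbc hcd nbd
  have p34 : φ s(c,d) ≠ φ s(d,e) := prop_ne hproper hcd hde nce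
  have p45 : φ s(d,e) ≠ φ s(e,a) := prop_ne hproper hde hea nad.symm
  have p51 : φ s(e,a) ≠ φ s(a,b) := prop_ne hproper hea hab nbe.symm
  simp only [List.map_cons, List.map_nil, List.nodup_cons, List.mem_cons,
    List.not_mem_nil, List.nodup_nil, List.mem_singleton, or_false, and_true] at hnd
  tauto

lemma fiber (hG5 : ∀ ⦃a : V⦄ (w : G.Walk a a), w.IsCycle → 5 ≤ w.length)
    {t : Finset (Sym2 V)} {x y z w u a b c d e : V}
    (hC : C5 G x y z w u) (hrep : t = pf x y z w)
    (hC' : C5 G a b c d e)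
    (hcase : t = pf b c d e ∨ t = pf c d e a ∨ t = pf d e a b ∨ t = pf e a b c) :
    pf a b c d ∈ ({pf y z w u, pf z w u x, pf w u x y, pf u x y z} :
      Finset (Finset (Sym2 V))) := by
  obtain ⟨xy, yz, zw, wu, ux, xz, xw, yw, yu, zu⟩ := hC
  obtain ⟨ab, bc, cd, de, ea, ac, ad, bd, be, ce⟩ := hC'
  subst hrep
  simp only [Finset.mem_insert, Finset.mem_singleton]
  rcases hcase with h | h | h | h
  · -- t = pf b c d e, missing vertex a
    rcases pf_eq bc.ne bd be cd.ne ce de.ne xy.ne xz xw yz.ne yw zw.ne h.symm with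
      ⟨rfl, rfl, rfl, rfl⟩ | ⟨rfl, rfl, rfl, rfl⟩
    · have hu : u = a := cn_unique hG5 xw ux.symm wu.symm ea ab
      subst hu
      tauto
    · have hu : u = a := cn_unique hG5 xw ux.symm wu.symm ab.symm ea.symm
      subst hu
      exact Or.inl (pf_rev _ _ _ _).symm
  · -- t = pf c d e a, missing vertex b
    rcases pf_eq cd.ne ce ac.symm de.ne ad.symm ea.ne xy.ne xz xw yz.ne yw zw.ne h.symm with
      ⟨rfl, rfl, rfl, rfl⟩ | ⟨rfl, rfl, rfl, rfl⟩
    · have hu : u = b := cn_unique hG5 xw ux.symm wu.symm ab bc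
      subst hu
      tauto
    · have hu : u = b := cn_unique hG5 xw ux.symm wu.symm bc.symm ab.symm
      subst hu
      exact Or.inr (Or.inl (pf_rev _ _ _ _).symm)
  · -- t = pf d e a b, missing vertex c
    rcases pf_eq de.ne ad.symm bd.symm ea.ne be.symm ab.ne xy.ne xz xw yz.ne yw zw.ne h.symm with
      ⟨rfl, rfl, rfl, rfl⟩ | ⟨rfl, rfl, rfl, rfl⟩
    · have hu : u = c := cn_unique hG5 xw ux.symm wu.symm bc cd
      subst hu
      tauto
    · have hu : u = c := cn_unique hG5 xw ux.symm wu.symm cd.symm bc.symm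
      subst hu
      exact Or.inr (Or.inr (Or.inl (pf_rev _ _ _ _).symm))
  · -- t = pf e a b c, missing vertex d
    rcases pf_eq ea.ne be.symm ce.symm ab.ne ac bc.ne xy.ne xz xw yz.ne yw zw.ne h.symm with
      ⟨rfl, rfl, rfl, rfl⟩ | ⟨rfl, rfl, rfl, rfl⟩
    · have hu : u = d := cn_unique hG5 xw ux.symm wu.symm cd de
      subst hu
      tauto
    · have hu : u = d := cn_unique hG5 xw ux.symm wu.symm de.symm cd.symm
      subst hu
      exact Or.inr (Or.inr (Or.inr (pf_rev _ _ _ _).symm))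

end NRP4Aux

open NRP4Aux

/-- In a graph of girth 5 and diameter 2 with a proper edge coloring in which no
5-cycle is rainbow, at least one fifth of the paths of length 3 are non-rainbow
(their three edges receive only two colors). Paths are identified with their
edge sets, so a path and its reversal count once. -/
theorem nonrainbow_P4_lower_bound {V : Type u} [Fintype V] [DecidableEq V]
    (G : SimpleGraph V) (hgirth : G.girth = 5) (hdiam : G.diam = 2)
    {C : Type v} (φ : Sym2 V → C) (hproper : IsProperEdgeColoring G φ)
    (hno5 : ∀ (u : V) (c : G.Walk u u), c.IsCycle → c.length = 5 →
      ¬ (c.edges.map φ).Nodup)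
    (S T : Set (Finset (Sym2 V)))
    (hS : S = {s | ∃ (u v : V) (p : G.Walk u v), p.IsPath ∧ p.length = 3 ∧
      p.edges.toFinset = s})
    (hT : T = {s | s ∈ S ∧ ¬ ∀ e₁ ∈ s, ∀ e₂ ∈ s, e₁ ≠ e₂ → φ e₁ ≠ φ e₂}) :
    S.ncard ≤ 5 * T.ncard := by
  classical
  -- girth consequence
  have hG5 : ∀ ⦃a : V⦄ (w : G.Walk a a), w.IsCycle → 5 ≤ w.length := by
    intro a w hw
    have h5 : G.egirth = 5 := by
      rcases eq_or_ne G.egirth ⊤ with h | h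
      · rw [SimpleGraph.girth, h] at hgirth; simp at hgirth
      · rw [SimpleGraph.girth] at hgirth
        exact ((ENat.toNat_eq_iff (by norm_num)).mp hgirth)
    have := le_egirth.mp h5.ge a w hw
    exact_mod_cast this
  have hSmem : ∀ s : Finset (Sym2 V), s ∈ S ↔
      ∃ a b c d : V, G.Adj a b ∧ G.Adj b c ∧ G.Adj c d ∧ a ≠ b ∧ a ≠ c ∧ a ≠ d ∧ b ≠ c ∧
        b ≠ d ∧ c ≠ d ∧ s = pf a b c d := by
    intro s
    rw [hS]
    simp only [Set.mem_setOf_eq]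
    exact mem_S
  have hTmem : ∀ s : Finset (Sym2 V), s ∈ T ↔
      s ∈ S ∧ ¬ ∀ e₁ ∈ s, ∀ e₂ ∈ s, e₁ ≠ e₂ → φ e₁ ≠ φ e₂ := by
    intro s
    rw [hT]
    simp only [Set.mem_setOf_eq]
  have hSfin : S.Finite := Set.toFinite S
  have hTfin : T.Finite := Set.toFinite T
  set Sf := hSfin.toFinset with hSf
  set Tf := hTfin.toFinset with hTf
  -- the relation between a rainbow P4 and the non-rainbow P4 assigned to it
  set R : Finset (Sym2 V) → Finset (Sym2 V) → Prop := fun s t =>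
    t ∈ T ∧ ∃ a b c d e, C5 G a b c d e ∧ s = pf a b c d ∧
      (t = pf b c d e ∨ t = pf c d e a ∨ t = pf d e a b ∨ t = pf e a b c) with hR
  obtain ⟨f, hRf⟩ : ∃ f : Finset (Sym2 V) → Finset (Sym2 V),
      ∀ s, (∃ t, R s t) → R s (f s) :=
    ⟨fun s => if h : ∃ t, R s t then h.choose else ∅,
     fun s h => by show R s (dite _ _ _); rw [dif_pos h]; exact h.choose_spec⟩
  -- every rainbow P4 is related to some non-rainbow P4
  have hA : ∀ s ∈ Sf \ Tf, ∃ t, R s t := by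
    intro s hs
    rw [Finset.mem_sdiff, hSfin.mem_toFinset, hTfin.mem_toFinset] at hs
    obtain ⟨hsS, hsT⟩ := hs
    have hrain : ∀ e₁ ∈ s, ∀ e₂ ∈ s, e₁ ≠ e₂ → φ e₁ ≠ φ e₂ := by
      by_contra hr
      exact hsT ((hTmem s).mpr ⟨hsS, hr⟩)
    obtain ⟨a, b, c, d, hab, hbc, hcd, n1, n2, n3, n4, n5, n6, rfl⟩ := (hSmem s).mp hsS
    have m1 : (s(a,b) : Sym2 V) ∈ pf a b c d := by simp [pf]
    have m2 : (s(b,c) : Sym2 V) ∈ pf a b c d := by simp [pf]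
    have m3 : (s(c,d) : Sym2 V) ∈ pf a b c d := by simp [pf]
    have r13 : φ s(a,b) ≠ φ s(c,d) := by
      apply hrain _ m1 _ m3
      rw [ne_eq, Sym2.eq_iff]
      tauto
    obtain ⟨e, hC, hdisj⟩ := keyA hG5 hdiam hproper hno5 hab hbc hcd n2 n3 n5 r13
    obtain ⟨hab', hbc', hcd', hde, hea, nac, nad, nbd, nbe, nce⟩ := hC
    have nae : a ≠ e := hea.ne'
    have nde : d ≠ e := hde.ne
    rcases hdisj with heq | heq | heq | heq
    · -- t = pf d e a b
      refine ⟨pf d e a b, ⟨(hTmem _).mpr ⟨(hSmem _).mpr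
          ⟨d, e, a, b, hde, hea, hab, nde, nad.symm, nbd.symm, nae.symm, nbe.symm, n1, rfl⟩, ?_⟩,
        a, b, c, d, e, ⟨hab, hbc, hcd, hde, hea, nac, nad, nbd, nbe, nce⟩, rfl, by tauto⟩⟩
      intro hall
      refine hall s(a,b) (by simp [pf]) s(d,e) (by simp [pf]) ?_ heq
      rw [ne_eq, Sym2.eq_iff]
      tauto
    · -- t = pf b c d e
      refine ⟨pf b c d e, ⟨(hTmem _).mpr ⟨(hSmem _).mpr
          ⟨b, c, d, e, hbc, hcd, hde, n4, n5, nbe, n6, nce, nde, rfl⟩, ?_⟩,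
        a, b, c, d, e, ⟨hab, hbc, hcd, hde, hea, nac, nad, nbd, nbe, nce⟩, rfl, by tauto⟩⟩
      intro hall
      refine hall s(b,c) (by simp [pf]) s(d,e) (by simp [pf]) ?_ heq
      rw [ne_eq, Sym2.eq_iff]
      tauto
    · -- t = pf e a b c
      refine ⟨pf e a b c, ⟨(hTmem _).mpr ⟨(hSmem _).mpr
          ⟨e, a, b, c, hea, hab, hbc, nae.symm, nbe.symm, nce.symm, n1, n2, n4, rfl⟩, ?_⟩,
        a, b, c, d, e, ⟨hab, hbc, hcd, hde, hea, nac, nad, nbd, nbe, nce⟩, rfl, by tauto⟩⟩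
      intro hall
      refine hall s(b,c) (by simp [pf]) s(e,a) (by simp [pf]) ?_ heq
      rw [ne_eq, Sym2.eq_iff]
      tauto
    · -- t = pf c d e a
      refine ⟨pf c d e a, ⟨(hTmem _).mpr ⟨(hSmem _).mpr
          ⟨c, d, e, a, hcd, hde, hea, n6, nce, nac.symm, nde, nad.symm, nae.symm, rfl⟩, ?_⟩,
        a, b, c, d, e, ⟨hab, hbc, hcd, hde, hea, nac, nad, nbd, nbe, nce⟩, rfl, by tauto⟩⟩
      intro hall
      refine hall s(c,d) (by simp [pf]) s(e,a) (by simp [pf]) ?_ heq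
      rw [ne_eq, Sym2.eq_iff]
      tauto
  have himg : ∀ s ∈ Sf \ Tf, f s ∈ Tf := by
    intro s hs
    rw [hTfin.mem_toFinset]
    exact (hRf s (hA s hs)).1
  have hquad4 : ∀ (p q r s : Finset (Sym2 V)), ({p, q, r, s} : Finset (Finset (Sym2 V))).card ≤ 4 := by
    intro p q r s
    have h1 := Finset.card_insert_le p ({q, r, s} : Finset (Finset (Sym2 V)))
    have h2 := Finset.card_insert_le q ({r, s} : Finset (Finset (Sym2 V)))
    have h3 := Finset.card_insert_le r ({s} : Finset (Finset (Sym2 V)))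
    simp only [Finset.card_singleton] at h1 h2 h3
    omega
  have hfib : ∀ t ∈ Tf, ((Sf \ Tf).filter (fun s => f s = t)).card ≤ 4 := by
    intro t _
    rcases Finset.eq_empty_or_nonempty ((Sf \ Tf).filter (fun s => f s = t)) with he | hne
    · rw [he]; simp
    · obtain ⟨s₀, hs₀⟩ := hne
      rw [Finset.mem_filter] at hs₀
      have hR₀ := hRf s₀ (hA s₀ hs₀.1)
      rw [hs₀.2] at hR₀
      obtain ⟨-, a, b, c, d, e, hC, -, hcase⟩ := hR₀
      have hrep : ∃ x y z w u, C5 G x y z w u ∧ t = pf x y z w := by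
        rcases hcase with h | h | h | h
        · exact ⟨b, c, d, e, a, hC.rot, h⟩
        · exact ⟨c, d, e, a, b, hC.rot.rot, h⟩
        · exact ⟨d, e, a, b, c, hC.rot.rot.rot, h⟩
        · exact ⟨e, a, b, c, d, hC.rot.rot.rot.rot, h⟩
      obtain ⟨x, y, z, w, u, hCx, hteq⟩ := hrep
      have hsub : ((Sf \ Tf).filter (fun s => f s = t)) ⊆
          {pf y z w u, pf z w u x, pf w u x y, pf u x y z} := by
        intro s hs
        rw [Finset.mem_filter] at hs
        have hRs := hRf s (hA s hs.1)
        rw [hs.2] at hRs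
        obtain ⟨-, a1, b1, c1, d1, e1, hC1, rfl, hcase1⟩ := hRs
        exact fiber hG5 hCx hteq hC1 hcase1
      exact le_trans (Finset.card_le_card hsub) (hquad4 _ _ _ _)
  have hcount : (Sf \ Tf).card ≤ 4 * Tf.card :=
    Finset.card_le_mul_card_image_of_maps_to himg 4 hfib
  have hsd : Sf.card ≤ (Sf \ Tf).card + Tf.card := Finset.card_le_card_sdiff_add_card
  rw [Set.ncard_eq_toFinset_card S hSfin, Set.ncard_eq_toFinset_card T hTfin, ← hSf, ← hTf]
  omega
end

section
/- Let G be an r-regular simple graph with girth at least 5, let φ be a proper edge coloring of G, and let e = ab be an edge of G. Among the (r−1)² paths of length 3 in G having e as their middle edge, at most r−1 are non-rainbow (i.e., have two of their three edges colored the same). -/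
open SimpleGraph

/-- In an `r`-regular graph of girth at least 5 with a proper edge coloring,
for any edge `ab`, among the `(r-1)^2` paths of length 3 having `ab` as middle
edge (given by a neighbor `x ≠ b` of `a` and a neighbor `y ≠ a` of `b`), at most
`r - 1` are non-rainbow (i.e. fail to have their three edges pairwise
differently colored). -/
theorem nonrainbow_middle_edge_upper_bound {V : Type u} [Fintype V]
    (G : SimpleGraph V) [DecidableRel G.Adj] {r : ℕ}
    (hreg : G.IsRegularOfDegree r) (hgirth : (5 : ℕ∞) ≤ G.egirth)
    {C : Type v} (φ : Sym2 V → C) (hproper : IsProperEdgeColoring G φ)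
    {a b : V} (hab : G.Adj a b) :
    ({xy : V × V | G.Adj a xy.1 ∧ xy.1 ≠ b ∧ G.Adj b xy.2 ∧ xy.2 ≠ a ∧
        xy.1 ≠ xy.2 ∧
        ¬ (φ s(xy.1, a) ≠ φ s(a, b) ∧ φ s(xy.1, a) ≠ φ s(b, xy.2) ∧
            φ s(a, b) ≠ φ s(b, xy.2))}).ncard ≤ r - 1 := by
  classical
  set S : Set (V × V) := {xy : V × V | G.Adj a xy.1 ∧ xy.1 ≠ b ∧ G.Adj b xy.2 ∧ xy.2 ≠ a ∧
        xy.1 ≠ xy.2 ∧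
        ¬ (φ s(xy.1, a) ≠ φ s(a, b) ∧ φ s(xy.1, a) ≠ φ s(b, xy.2) ∧
            φ s(a, b) ≠ φ s(b, xy.2))} with hS
  have hkey : ∀ x y, (x, y) ∈ S → φ s(x, a) = φ s(b, y) := by
    rintro x y ⟨hax, hxb, hby, hya, hxy, hnr⟩
    by_contra hne
    apply hnr
    refine ⟨?_, hne, ?_⟩
    · refine hproper (G.mem_edgeSet.2 hax.symm) (G.mem_edgeSet.2 hab) ?_ ⟨a, by simp⟩
      intro h
      rw [Sym2.eq_iff] at h
      rcases h with ⟨_, h⟩ | ⟨h, _⟩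
      exacts [hab.ne h, hxb h]
    · refine hproper (G.mem_edgeSet.2 hab) (G.mem_edgeSet.2 hby) ?_ ⟨b, by simp⟩
      intro h
      rw [Sym2.eq_iff] at h
      rcases h with ⟨h, _⟩ | ⟨h, _⟩
      exacts [hab.ne h, hya h.symm]
  have hinj : Set.InjOn Prod.fst S := by
    rintro ⟨x, y₁⟩ h1 ⟨x₂, y₂⟩ h2 (hx : x = x₂)
    subst hx
    have e1 := hkey x y₁ h1
    have e2 := hkey x y₂ h2
    by_contra hne
    have hy : y₁ ≠ y₂ := fun h => hne (by rw [h])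
    refine hproper (G.mem_edgeSet.2 h1.2.2.1) (G.mem_edgeSet.2 h2.2.2.1) ?_ ⟨b, by simp⟩
      (e1 ▸ e2 ▸ rfl)
    intro h
    rw [Sym2.eq_iff] at h
    rcases h with ⟨_, h⟩ | ⟨h, h'⟩
    exacts [hy h, hy (h'.trans h)]
  calc S.ncard = (Prod.fst '' S).ncard := (Set.ncard_image_of_injOn hinj).symm
    _ ≤ ((G.neighborFinset a).erase b).card := by
        rw [← Set.ncard_coe_finset]
        refine Set.ncard_le_ncard ?_ (Set.toFinite _)
        rintro x ⟨⟨x', y⟩, ⟨hax, hxb, _, _, _, _⟩, rfl⟩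
        simp only [Finset.coe_erase, Set.mem_diff, Finset.mem_coe,
          SimpleGraph.mem_neighborFinset, Set.mem_singleton_iff]
        exact ⟨hax, hxb⟩
    _ = r - 1 := by
        have hd : (G.neighborFinset a).card = r := hreg a
        rw [Finset.card_erase_of_mem (by simpa using hab), hd]
end

section
/- Let G be a 7-regular simple graph on 50 vertices with girth 5 and diameter 2. Then G contains exactly 1260 distinct 5-cycles (as subgraphs). -/
open SimpleGraph Finset


set_option synthInstance.maxHeartbeats 1000000 in
set_option synthInstance.maxSize 5000 in
set_option maxHeartbeats 4000000 in
private lemma HS_finkey : ∀ i j k l m : Fin 5,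
    (i ≠ j ∧ i ≠ k ∧ i ≠ l ∧ i ≠ m ∧ j ≠ k ∧ j ≠ l ∧ j ≠ m ∧ k ≠ l ∧ k ≠ m ∧ l ≠ m) →
    ((j = i + 1 ∨ i = j + 1) ∧ (k = j + 1 ∨ j = k + 1) ∧ (l = k + 1 ∨ k = l + 1) ∧
      (m = l + 1 ∨ l = m + 1)) →
    ((i,j,k,l,m) = ((0:Fin 5),(1:Fin 5),(2:Fin 5),(3:Fin 5),(4:Fin 5)) ∨
     (i,j,k,l,m) = (1,2,3,4,0) ∨ (i,j,k,l,m) = (2,3,4,0,1) ∨ (i,j,k,l,m) = (3,4,0,1,2) ∨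
     (i,j,k,l,m) = (4,0,1,2,3) ∨ (i,j,k,l,m) = (0,4,3,2,1) ∨ (i,j,k,l,m) = (4,3,2,1,0) ∨
     (i,j,k,l,m) = (3,2,1,0,4) ∨ (i,j,k,l,m) = (2,1,0,4,3) ∨ (i,j,k,l,m) = (1,0,4,3,2)) := by
  decide

private lemma HS_idx {V : Type*} (a b c d e p q : V)
    (h : (p = a ∧ (q = b ∨ q = e)) ∨ (p = b ∧ (q = a ∨ q = c)) ∨ (p = c ∧ (q = b ∨ q = d))
      ∨ (p = d ∧ (q = c ∨ q = e)) ∨ (p = e ∧ (q = d ∨ q = a))) :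
    ∃ i j : Fin 5, p = ![a,b,c,d,e] i ∧ q = ![a,b,c,d,e] j ∧ (j = i + 1 ∨ i = j + 1) := by
  rcases h with ⟨rfl, rfl | rfl⟩ | ⟨rfl, rfl | rfl⟩ | ⟨rfl, rfl | rfl⟩ | ⟨rfl, rfl | rfl⟩ |
    ⟨rfl, rfl | rfl⟩
  · exact ⟨0, 1, by simp, by simp, Or.inl rfl⟩
  · exact ⟨0, 4, by simp, by simp, Or.inr rfl⟩
  · exact ⟨1, 0, by simp, by simp, Or.inr rfl⟩
  · exact ⟨1, 2, by simp, by simp, Or.inl rfl⟩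
  · exact ⟨2, 1, by simp, by simp, Or.inr rfl⟩
  · exact ⟨2, 3, by simp, by simp, Or.inl rfl⟩
  · exact ⟨3, 2, by simp, by simp, Or.inr rfl⟩
  · exact ⟨3, 4, by simp, by simp, Or.inl rfl⟩
  · exact ⟨4, 3, by simp, by simp, Or.inr rfl⟩
  · exact ⟨4, 0, by simp, by simp, Or.inl rfl⟩

set_option maxHeartbeats 1000000 in
private lemma HS_reconstruct {V : Type*} [DecidableEq V] (a b c d e p q r u w : V)
    (hab : a ≠ b) (hac : a ≠ c) (had : a ≠ d) (hae : a ≠ e) (hbc : b ≠ c)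
    (hbd : b ≠ d) (hbe : b ≠ e) (hcd : c ≠ d) (hce : c ≠ e) (hde : d ≠ e)
    (hpq : p ≠ q) (hpr : p ≠ r) (hpu : p ≠ u) (hpw : p ≠ w) (hqr : q ≠ r)
    (hqu : q ≠ u) (hqw : q ≠ w) (hru : r ≠ u) (hrw : r ≠ w) (huw : u ≠ w)
    (hh1 : (p = a ∧ (q = b ∨ q = e)) ∨ (p = b ∧ (q = a ∨ q = c)) ∨ (p = c ∧ (q = b ∨ q = d))
      ∨ (p = d ∧ (q = c ∨ q = e)) ∨ (p = e ∧ (q = d ∨ q = a)))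
    (hh2 : (q = a ∧ (r = b ∨ r = e)) ∨ (q = b ∧ (r = a ∨ r = c)) ∨ (q = c ∧ (r = b ∨ r = d))
      ∨ (q = d ∧ (r = c ∨ r = e)) ∨ (q = e ∧ (r = d ∨ r = a)))
    (hh3 : (r = a ∧ (u = b ∨ u = e)) ∨ (r = b ∧ (u = a ∨ u = c)) ∨ (r = c ∧ (u = b ∨ u = d))
      ∨ (r = d ∧ (u = c ∨ u = e)) ∨ (r = e ∧ (u = d ∨ u = a)))
    (hh4 : (u = a ∧ (w = b ∨ w = e)) ∨ (u = b ∧ (w = a ∨ w = c)) ∨ (u = c ∧ (w = b ∨ w = d))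
      ∨ (u = d ∧ (w = c ∨ w = e)) ∨ (u = e ∧ (w = d ∨ w = a))) :
    (p, q, r, u, w) ∈ ({(a,b,c,d,e),(b,c,d,e,a),(c,d,e,a,b),(d,e,a,b,c),(e,a,b,c,d),
      (a,e,d,c,b),(e,d,c,b,a),(d,c,b,a,e),(c,b,a,e,d),(b,a,e,d,c)} :
      Finset (V × V × V × V × V)) := by
  have finj : Function.Injective ![a,b,c,d,e] := by
    intro x y h
    fin_cases x <;> fin_cases y <;> simp_all
  obtain ⟨i, j, hp, hq, hij⟩ := HS_idx a b c d e p q hh1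
  obtain ⟨j', k, hq', hr, hjk⟩ := HS_idx a b c d e q r hh2
  obtain ⟨k', l, hr', hu, hkl⟩ := HS_idx a b c d e r u hh3
  obtain ⟨l', m, hu', hw, hlm⟩ := HS_idx a b c d e u w hh4
  obtain rfl : j = j' := finj (hq ▸ hq')
  obtain rfl : k = k' := finj (hr ▸ hr')
  obtain rfl : l = l' := finj (hu ▸ hu')
  have key := HS_finkey i j k l m
    ⟨fun h => hpq (by rw [hp, hq, h]), fun h => hpr (by rw [hp, hr, h]),
     fun h => hpu (by rw [hp, hu, h]), fun h => hpw (by rw [hp, hw, h]),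
     fun h => hqr (by rw [hq, hr, h]), fun h => hqu (by rw [hq, hu, h]),
     fun h => hqw (by rw [hq, hw, h]), fun h => hru (by rw [hr, hu, h]),
     fun h => hrw (by rw [hr, hw, h]), fun h => huw (by rw [hu, hw, h])⟩
    ⟨hij, hjk, hkl, hlm⟩
  subst hp hq hr hu hw
  rcases key with h|h|h|h|h|h|h|h|h|h <;>
    (rw [Prod.mk.injEq, Prod.mk.injEq, Prod.mk.injEq, Prod.mk.injEq] at h;
     obtain ⟨rfl, rfl, rfl, rfl, rfl⟩ := h; simp)

private def HSt {V : Type*} [Fintype V] (G : SimpleGraph V) [DecidableRel G.Adj] :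
    Finset (V × V × V × V × V) :=
  univ.filter fun t => G.Adj t.1 t.2.1 ∧ G.Adj t.2.1 t.2.2.1 ∧ G.Adj t.2.2.1 t.2.2.2.1 ∧
    G.Adj t.2.2.2.1 t.2.2.2.2 ∧ G.Adj t.2.2.2.2 t.1

private def HSf {V : Type*} [DecidableEq V] (t : V × V × V × V × V) : Finset (Sym2 V) :=
  {s(t.1, t.2.1), s(t.2.1, t.2.2.1), s(t.2.2.1, t.2.2.2.1), s(t.2.2.2.1, t.2.2.2.2),
    s(t.2.2.2.2, t.1)}

private lemma mem_HSt {V : Type*} [Fintype V] {G : SimpleGraph V} [DecidableRel G.Adj]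
    {a b c d e : V} : (a, b, c, d, e) ∈ HSt G ↔
      G.Adj a b ∧ G.Adj b c ∧ G.Adj c d ∧ G.Adj d e ∧ G.Adj e a := by
  simp [HSt]

private lemma HS_edge {V : Type*} [DecidableEq V] {a b c d e x y : V}
    (h : s(x,y) ∈ HSf (a,b,c,d,e)) :
    (x = a ∧ (y = b ∨ y = e)) ∨ (x = b ∧ (y = a ∨ y = c)) ∨ (x = c ∧ (y = b ∨ y = d))
      ∨ (x = d ∧ (y = c ∨ y = e)) ∨ (x = e ∧ (y = d ∨ y = a)) := by
  simp only [HSf, Finset.mem_insert, Finset.mem_singleton, Sym2.eq_iff] at h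
  tauto

private lemma HS_distinct {V : Type*} {G : SimpleGraph V}
    (tri : ∀ {x y z : V}, G.Adj x y → G.Adj y z → G.Adj z x → False)
    {a b c d e : V} (h1 : G.Adj a b) (h2 : G.Adj b c) (h3 : G.Adj c d) (h4 : G.Adj d e)
    (h5 : G.Adj e a) :
    a ≠ b ∧ a ≠ c ∧ a ≠ d ∧ a ≠ e ∧ b ≠ c ∧ b ≠ d ∧ b ≠ e ∧ c ≠ d ∧ c ≠ e ∧ d ≠ e := by
  refine ⟨h1.ne, ?_, ?_, h5.ne', h2.ne, ?_, ?_, h3.ne, ?_, h4.ne⟩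
  · rintro rfl; exact tri h3 h4 h5
  · rintro rfl; exact tri h1 h2 h3
  · rintro rfl; exact tri h5 h1 h4
  · rintro rfl; exact tri h2 h3 h4
  · rintro rfl; exact tri h1 h2 h5

set_option maxHeartbeats 2000000 in
private lemma HS_fiber {V : Type*} [Fintype V] [DecidableEq V] (G : SimpleGraph V)
    [DecidableRel G.Adj]
    (tri : ∀ {x y z : V}, G.Adj x y → G.Adj y z → G.Adj z x → False) :
    ∀ t₀ ∈ HSt G, ((HSt G).filter fun t => HSf t = HSf t₀).card = 10 := by
  rintro ⟨a, b, c, d, e⟩ ht₀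
  rw [mem_HSt] at ht₀
  obtain ⟨h1, h2, h3, h4, h5⟩ := ht₀
  obtain ⟨hab, hac, had, hae, hbc, hbd, hbe, hcd, hce, hde⟩ := HS_distinct tri h1 h2 h3 h4 h5
  have hDeq : (HSt G).filter (fun t => HSf t = HSf (a,b,c,d,e)) =
      ({(a,b,c,d,e),(b,c,d,e,a),(c,d,e,a,b),(d,e,a,b,c),(e,a,b,c,d),
        (a,e,d,c,b),(e,d,c,b,a),(d,c,b,a,e),(c,b,a,e,d),(b,a,e,d,c)} :
        Finset (V × V × V × V × V)) := by
    apply Finset.Subset.antisymm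
    · rintro ⟨p, q, r, u, w⟩ htmem
      rw [Finset.mem_filter, mem_HSt] at htmem
      obtain ⟨⟨g1, g2, g3, g4, g5⟩, heq⟩ := htmem
      obtain ⟨hpq, hpr, hpu, hpw, hqr, hqu, hqw, hru, hrw, huw⟩ :=
        HS_distinct tri g1 g2 g3 g4 g5
      have m1 : s(p,q) ∈ HSf (a,b,c,d,e) := heq ▸ (by simp [HSf])
      have m2 : s(q,r) ∈ HSf (a,b,c,d,e) := heq ▸ (by simp [HSf])
      have m3 : s(r,u) ∈ HSf (a,b,c,d,e) := heq ▸ (by simp [HSf])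
      have m4 : s(u,w) ∈ HSf (a,b,c,d,e) := heq ▸ (by simp [HSf])
      exact HS_reconstruct a b c d e p q r u w hab hac had hae hbc hbd hbe hcd hce hde
        hpq hpr hpu hpw hqr hqu hqw hru hrw huw
        (HS_edge m1) (HS_edge m2) (HS_edge m3) (HS_edge m4)
    · intro t htmem
      have h1' := h1.symm; have h2' := h2.symm; have h3' := h3.symm
      have h4' := h4.symm; have h5' := h5.symm
      simp only [Finset.mem_insert, Finset.mem_singleton] at htmem
      rcases htmem with rfl|rfl|rfl|rfl|rfl|rfl|rfl|rfl|rfl|rfl <;>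
        (rw [Finset.mem_filter, mem_HSt];
         refine ⟨⟨by assumption, by assumption, by assumption, by assumption, by assumption⟩, ?_⟩;
         ext z;
         simp only [HSf, Finset.mem_insert, Finset.mem_singleton];
         all_goals constructor <;> rintro (rfl|rfl|rfl|rfl|rfl) <;> simp [Sym2.eq_iff])
  rw [hDeq]
  rw [Finset.card_insert_of_notMem (by
      simp [Prod.ext_iff, hab, hac, had, hae, hbc, hbd, hbe, hcd, hce, hde,
        hab.symm, hac.symm, had.symm, hae.symm, hbc.symm, hbd.symm, hbe.symm,
        hcd.symm, hce.symm, hde.symm]),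
    Finset.card_insert_of_notMem (by
      simp [Prod.ext_iff, hab, hac, had, hae, hbc, hbd, hbe, hcd, hce, hde,
        hab.symm, hac.symm, had.symm, hae.symm, hbc.symm, hbd.symm, hbe.symm,
        hcd.symm, hce.symm, hde.symm]),
    Finset.card_insert_of_notMem (by
      simp [Prod.ext_iff, hab, hac, had, hae, hbc, hbd, hbe, hcd, hce, hde,
        hab.symm, hac.symm, had.symm, hae.symm, hbc.symm, hbd.symm, hbe.symm,
        hcd.symm, hce.symm, hde.symm]),
    Finset.card_insert_of_notMem (by
      simp [Prod.ext_iff, hab, hac, had, hae, hbc, hbd, hbe, hcd, hce, hde,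
        hab.symm, hac.symm, had.symm, hae.symm, hbc.symm, hbd.symm, hbe.symm,
        hcd.symm, hce.symm, hde.symm]),
    Finset.card_insert_of_notMem (by
      simp [Prod.ext_iff, hab, hac, had, hae, hbc, hbd, hbe, hcd, hce, hde,
        hab.symm, hac.symm, had.symm, hae.symm, hbc.symm, hbd.symm, hbe.symm,
        hcd.symm, hce.symm, hde.symm]),
    Finset.card_insert_of_notMem (by
      simp [Prod.ext_iff, hab, hac, had, hae, hbc, hbd, hbe, hcd, hce, hde,
        hab.symm, hac.symm, had.symm, hae.symm, hbc.symm, hbd.symm, hbe.symm,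
        hcd.symm, hce.symm, hde.symm]),
    Finset.card_insert_of_notMem (by
      simp [Prod.ext_iff, hab, hac, had, hae, hbc, hbd, hbe, hcd, hce, hde,
        hab.symm, hac.symm, had.symm, hae.symm, hbc.symm, hbd.symm, hbe.symm,
        hcd.symm, hce.symm, hde.symm]),
    Finset.card_insert_of_notMem (by
      simp [Prod.ext_iff, hab, hac, had, hae, hbc, hbd, hbe, hcd, hce, hde,
        hab.symm, hac.symm, had.symm, hae.symm, hbc.symm, hbd.symm, hbe.symm,
        hcd.symm, hce.symm, hde.symm]),
    Finset.card_insert_of_notMem (by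
      simp [Prod.ext_iff, hab, hac, had, hae, hbc, hbd, hbe, hcd, hce, hde,
        hab.symm, hac.symm, had.symm, hae.symm, hbc.symm, hbd.symm, hbe.symm,
        hcd.symm, hce.symm, hde.symm]),
    Finset.card_singleton]

private lemma HS_count {V : Type*} [Fintype V] [DecidableEq V] (G : SimpleGraph V)
    [DecidableRel G.Adj]
    (hcard : Fintype.card V = 50) (hreg : G.IsRegularOfDegree 7)
    (tri : ∀ {x y z : V}, G.Adj x y → G.Adj y z → G.Adj z x → False)
    (cn : ∀ {x y : V}, x ≠ y → ¬ G.Adj x y → ∃! z, G.Adj x z ∧ G.Adj z y) :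
    (HSt G).card = 12600 := by
  unfold HSt
  classical
  have hdeg : ∀ v : V, (G.neighborFinset v).card = 7 := hreg
  have c2card : ∀ x y : V, (∑ z : V, if G.Adj x z ∧ G.Adj z y then 1 else 0)
      = (univ.filter fun z => G.Adj x z ∧ G.Adj z y).card :=
    fun x y => (Finset.card_filter _ _).symm
  have c2adj : ∀ x y : V, G.Adj x y →
      (∑ z : V, if G.Adj x z ∧ G.Adj z y then 1 else 0) = 0 := by
    intro x y h
    rw [c2card]
    simp only [Finset.card_eq_zero, Finset.filter_eq_empty_iff]
    rintro z - ⟨h1, h2⟩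
    exact tri h1 h2 h.symm
  have c2n : ∀ x y : V, x ≠ y → ¬ G.Adj x y →
      (∑ z : V, if G.Adj x z ∧ G.Adj z y then 1 else 0) = 1 := by
    intro x y hne hnadj
    obtain ⟨z, hz, hz'⟩ := cn hne hnadj
    rw [c2card, Finset.card_eq_one]
    exact ⟨z, by ext w; simp only [Finset.mem_filter, Finset.mem_univ, true_and,
      Finset.mem_singleton]; exact ⟨fun h => hz' w h, fun h => h ▸ hz⟩⟩
  -- cnt3
  have c3sum : ∀ x y : V, (∑ d : V, ∑ e : V, if G.Adj x d ∧ G.Adj d e ∧ G.Adj e y then 1 else 0)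
      = ∑ d ∈ G.neighborFinset x, (∑ z : V, if G.Adj d z ∧ G.Adj z y then 1 else 0) := by
    intro x y
    rw [neighborFinset_eq_filter, Finset.sum_filter]
    refine Finset.sum_congr rfl fun d _ => ?_
    by_cases h : G.Adj x d <;> simp [h]
  have c3n : ∀ x y : V, x ≠ y → ¬ G.Adj x y →
      (∑ d : V, ∑ e : V, if G.Adj x d ∧ G.Adj d e ∧ G.Adj e y then 1 else 0) = 6 := by
    intro x y hne hnadj
    rw [c3sum]
    have hval : ∀ d ∈ G.neighborFinset x,
        (∑ z : V, if G.Adj d z ∧ G.Adj z y then 1 else 0) = if G.Adj d y then 0 else 1 := by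
      intro d hd
      rw [mem_neighborFinset] at hd
      by_cases h : G.Adj d y
      · simp only [h, if_true]; exact c2adj d y h
      · have hdy : d ≠ y := by rintro rfl; exact hnadj hd
        simp only [h, if_false]; exact c2n d y hdy h
    rw [Finset.sum_congr rfl hval, Finset.sum_ite, Finset.sum_const, Finset.sum_const,
      smul_zero, zero_add, smul_eq_mul, mul_one]
    have heq : (G.neighborFinset x).filter (fun d => G.Adj d y) =
        univ.filter fun z => G.Adj x z ∧ G.Adj z y := by
      ext z; simp [mem_neighborFinset]
    have hno : ((G.neighborFinset x).filter (fun d => G.Adj d y)).card = 1 := by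
      rw [heq, ← c2card]; exact c2n x y hne hnadj
    have hsplit := Finset.card_filter_add_card_filter_not
      (s := G.neighborFinset x) (p := fun d => G.Adj d y)
    rw [hdeg x] at hsplit
    omega
  have c3diag : ∀ x : V, (∑ d : V, ∑ e : V, if G.Adj x d ∧ G.Adj d e ∧ G.Adj e x then 1 else 0)
      = 0 := by
    intro x
    rw [c3sum]
    refine Finset.sum_eq_zero fun d hd => ?_
    rw [mem_neighborFinset] at hd
    exact c2adj d x hd.symm
  -- main count
  rw [Finset.card_filter]
  simp only [Fintype.sum_prod_type]
  have hinner : ∀ a b c : V, (∑ d : V, ∑ e : V,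
      if G.Adj a b ∧ G.Adj b c ∧ G.Adj c d ∧ G.Adj d e ∧ G.Adj e a then 1 else 0)
      = if G.Adj a b ∧ G.Adj b c then
          (∑ d : V, ∑ e : V, if G.Adj c d ∧ G.Adj d e ∧ G.Adj e a then 1 else 0) else 0 := by
    intro a b c
    by_cases h1 : G.Adj a b
    · by_cases h2 : G.Adj b c
      · simp [h1, h2]
      · simp [h2]
    · simp [h1]
  simp only [hinner]
  have hc : ∀ a b : V, (∑ c : V, if G.Adj a b ∧ G.Adj b c then
      (∑ d : V, ∑ e : V, if G.Adj c d ∧ G.Adj d e ∧ G.Adj e a then 1 else 0) else 0)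
      = if G.Adj a b then 36 else 0 := by
    intro a b
    by_cases h1 : G.Adj a b
    · simp only [h1, true_and, if_true]
      have : ∀ c : V, (if G.Adj b c then
          (∑ d : V, ∑ e : V, if G.Adj c d ∧ G.Adj d e ∧ G.Adj e a then 1 else 0) else 0)
          = if G.Adj b c then (if c = a then 0 else 6) else 0 := by
        intro c
        by_cases h2 : G.Adj b c
        · simp only [h2, if_true]
          by_cases hca : c = a
          · subst hca; simp only [if_pos rfl]; exact c3diag c
          · rw [if_neg hca]
            have hnadj : ¬ G.Adj c a := fun h => tri h h1 h2
            exact c3n c a hca hnadj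
        · simp [h2]
      simp only [this]
      rw [← Finset.sum_filter, ← neighborFinset_eq_filter,
        Finset.sum_eq_sum_sdiff_singleton_add ((SimpleGraph.mem_neighborFinset _ _ _).2 h1.symm)]
      rw [if_pos rfl, add_zero]
      have : ∀ c ∈ G.neighborFinset b \ {a}, (if c = a then 0 else 6) = 6 := by
        intro c hc
        rw [Finset.mem_sdiff, Finset.mem_singleton] at hc
        rw [if_neg hc.2]
      rw [Finset.sum_congr rfl this, Finset.sum_const, smul_eq_mul,
        Finset.card_sdiff_of_subset (by simp [SimpleGraph.mem_neighborFinset, h1.symm]),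
        Finset.card_singleton, hdeg b]
    · simp [h1]
  simp only [hc]
  have hb : ∀ a : V, (∑ b : V, if G.Adj a b then 36 else 0) = 252 := by
    intro a
    rw [← Finset.sum_filter, ← neighborFinset_eq_filter, Finset.sum_const, smul_eq_mul, hdeg a]
  simp only [hb, Finset.sum_const, smul_eq_mul, Finset.card_univ, hcard]

universe u

/-- A 7-regular graph on 50 vertices with girth 5 and diameter 2 (i.e. the
Hoffman-Singleton graph) contains exactly 1260 distinct 5-cycles, where cycles
are identified with their edge sets (rotations and reflections count once). -/
theorem hoffmanSingleton_five_cycle_count {V : Type u} [Fintype V] [DecidableEq V]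
    (G : SimpleGraph V) [DecidableRel G.Adj]
    (hcard : Fintype.card V = 50) (hreg : G.IsRegularOfDegree 7)
    (hgirth : G.girth = 5) (hdiam : G.diam = 2) :
    ({s : Finset (Sym2 V) | ∃ (w : V) (c : G.Walk w w),
        c.IsCycle ∧ c.length = 5 ∧ c.edges.toFinset = s}).ncard = 1260 := by
  classical
  -- every cycle has length ≥ 5
  have h5len : ∀ ⦃x : V⦄ (w : G.Walk x x), w.IsCycle → 5 ≤ w.length := by
    intro x w hw
    have hne : G.egirth ≠ ⊤ := by
      intro h
      rw [girth, h] at hgirth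
      simp at hgirth
    have h5 : (5 : ℕ∞) ≤ G.egirth := by
      rw [girth] at hgirth
      rw [← ENat.coe_toNat hne, hgirth]
      exact le_refl _
    exact_mod_cast (le_egirth.mp h5) x w hw
  -- no triangles
  have tri : ∀ {x y z : V}, G.Adj x y → G.Adj y z → G.Adj z x → False := by
    intro x y z hxy hyz hzx
    have hc : (SimpleGraph.Walk.cons hxy (.cons hyz (.cons hzx .nil))).IsCycle := by
      rw [Walk.isCycle_def]
      refine ⟨?_, by simp, ?_⟩ <;>
        simp [Walk.isTrail_def, Walk.edges_cons, List.Nodup, List.pairwise_cons, Sym2.eq_iff,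
          hxy.ne, hyz.ne, hzx.ne, hxy.ne', hyz.ne', hzx.ne']
    have := h5len _ hc
    simp [Walk.length_cons] at this
  -- no squares
  have quad : ∀ {x y z t : V}, G.Adj x y → G.Adj y z → G.Adj z t → G.Adj t x →
      x ≠ z → y ≠ t → False := by
    intro x y z t hxy hyz hzt htx hxz hyt
    have hc : (SimpleGraph.Walk.cons hxy (.cons hyz (.cons hzt (.cons htx .nil)))).IsCycle := by
      rw [Walk.isCycle_def]
      refine ⟨?_, by simp, ?_⟩ <;>
        simp [Walk.isTrail_def, Walk.edges_cons, List.Nodup, List.pairwise_cons, Sym2.eq_iff,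
          hxy.ne, hyz.ne, hzt.ne, htx.ne, hxy.ne', hyz.ne', hzt.ne', htx.ne', hxz, hxz.symm,
          hyt, hyt.symm]
    have := h5len _ hc
    simp [Walk.length_cons] at this
  -- unique common neighbour for non-adjacent vertices
  have cn : ∀ {x y : V}, x ≠ y → ¬ G.Adj x y → ∃! z, G.Adj x z ∧ G.Adj z y := by
    intro x y hne hnadj
    have hetop : G.ediam ≠ ⊤ := by
      intro h
      rw [diam, h] at hdiam
      simp at hdiam
    have hed2 : G.ediam = 2 := by
      rw [diam] at hdiam
      rw [← ENat.coe_toNat hetop, hdiam]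
      rfl
    have hle : G.edist x y ≤ 2 := hed2 ▸ edist_le_ediam
    have hr : G.Reachable x y := reachable_of_edist_ne_top (by
      intro h; rw [h] at hle; exact absurd hle (by simp))
    have h0 : G.edist x y ≠ 0 := by simp [edist_eq_zero_iff, hne]
    have h1 : G.edist x y ≠ 1 := by simp [edist_eq_one_iff_adj, hnadj]
    have hnt : G.edist x y ≠ ⊤ := fun h => by rw [h] at hle; exact absurd hle (by simp)
    have hcast : ((G.edist x y).toNat : ℕ∞) = G.edist x y := ENat.coe_toNat hnt
    have h2 : G.edist x y = 2 := by
      rw [← hcast] at hle h0 h1 ⊢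
      have t1 : (G.edist x y).toNat ≤ 2 := by exact_mod_cast hle
      have t2 : (G.edist x y).toNat ≠ 0 := by exact_mod_cast h0
      have t3 : (G.edist x y).toNat ≠ 1 := by exact_mod_cast h1
      have : (G.edist x y).toNat = 2 := by omega
      rw [this]
      rfl
    obtain ⟨w, hw⟩ := hr.exists_walk_length_eq_edist
    rw [h2] at hw
    have hwl : w.length = 2 := by exact_mod_cast hw
    obtain ⟨z, hxz, hzy⟩ : ∃ z, G.Adj x z ∧ G.Adj z y := by
      cases w with
      | nil => simp at hwl
      | cons h p =>
        cases p with
        | nil => simp at hwl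
        | cons h' p' =>
          cases p' with
          | nil => exact ⟨_, h, h'⟩
          | cons h'' p'' => simp [Walk.length_cons] at hwl
    refine ⟨z, ⟨hxz, hzy⟩, ?_⟩
    rintro z' ⟨hxz', hz'y⟩
    by_contra hzz'
    exact quad hxz hzy hz'y.symm hxz'.symm hne fun h => hzz' h.symm
  -- the image card
  have hTcard : (HSt G).card = 12600 := HS_count G hcard hreg tri cn
  have hfib := HS_fiber G tri
  have himg : ((HSt G).image HSf).card * 10 = 12600 := by
    rw [← hTcard, Finset.card_eq_sum_card_image HSf (HSt G)]
    rw [Finset.sum_congr rfl (fun s hs => ?_), Finset.sum_const, smul_eq_mul, mul_comm]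
    obtain ⟨t₀, ht₀, rfl⟩ := Finset.mem_image.1 hs
    exact hfib t₀ ht₀
  -- the set equality
  have hset : {s : Finset (Sym2 V) | ∃ (w : V) (c : G.Walk w w),
      c.IsCycle ∧ c.length = 5 ∧ c.edges.toFinset = s} = ↑((HSt G).image HSf) := by
    ext s
    simp only [Set.mem_setOf_eq, Finset.coe_image, Set.mem_image, Finset.mem_coe]
    constructor
    · rintro ⟨w, c, hcyc, hlen, rfl⟩
      cases c with
      | nil => simp at hlen
      | cons ha1 p =>
        cases p with
        | nil => simp at hlen
        | cons ha2 p =>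
          cases p with
          | nil => simp at hlen
          | cons ha3 p =>
            cases p with
            | nil => simp at hlen
            | cons ha4 p =>
              cases p with
              | nil => simp at hlen
              | cons ha5 p =>
                cases p with
                | nil =>
                  refine ⟨(_, _, _, _, _), mem_HSt.2 ⟨ha1, ha2, ha3, ha4, ha5⟩, ?_⟩
                  simp [HSf, Walk.edges_cons]
                | cons ha6 p => simp [Walk.length_cons] at hlen
    · rintro ⟨⟨a, b, c, d, e⟩, ht, rfl⟩
      rw [mem_HSt] at ht
      obtain ⟨h1, h2, h3, h4, h5⟩ := ht
      obtain ⟨hab, hac, had, hae, hbc, hbd, hbe, hcd, hce, hde⟩ := HS_distinct tri h1 h2 h3 h4 h5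
      refine ⟨a, .cons h1 (.cons h2 (.cons h3 (.cons h4 (.cons h5 .nil)))), ?_, rfl, ?_⟩
      · rw [Walk.isCycle_def]
        refine ⟨?_, by simp, ?_⟩ <;>
          simp [Walk.isTrail_def, Walk.edges_cons, List.Nodup, List.pairwise_cons, Sym2.eq_iff,
            hab, hac, had, hae, hbc, hbd, hbe, hcd, hce, hde,
            hab.symm, hac.symm, had.symm, hae.symm, hbc.symm, hbd.symm, hbe.symm,
            hcd.symm, hce.symm, hde.symm]
      · simp [HSf, Walk.edges_cons]
  rw [hset, Set.ncard_coe_finset]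
  omega
end

section
/- Let G be a bipartite simple graph with diameter 6 and girth 12. Then every path in G with 8 vertices (a path of length 7) is a subgraph of exactly one 12-cycle of G. -/
/-!
Two distinct paths with the same ends close up a cycle no longer than their total length, so
below the girth paths are unique. A geodesic `q` from `b` to `a` has length at most 6, odd length
since `p` and `q` form a closed walk in a bipartite graph, and length at least 5 since `p` and `q`
are two paths of total length at least the girth 12. Hence `p` and `q` form a 12-cycle. Cutting any
12-cycle through `p` at `a` and `b` gives two paths of total length 12; the shorter one has length
at most 5 and so is `q`, and the other one contains the edges of `p`, which are not in `q`.
Within a path, a subpath with the same ends is the whole path, so the other one is `p`.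
-/

open SimpleGraph

namespace SimpleGraph.Walk

variable {V : Type*} {G : SimpleGraph V} {u v : V}

theorem IsPath.eq_of_length_add_lt_egirth {p q : G.Walk u v} (hp : p.IsPath) (hq : q.IsPath)
    (h : ((p.length + q.length : ℕ) : ℕ∞) < G.egirth) : p = q := by
  by_contra hne
  obtain ⟨_, -, -, c, hc, hlen⟩ := hp.exists_isCycle_length_le_add_of_ne hq hne
  exact (egirth_le_length hc).not_gt (lt_of_le_of_lt (by exact_mod_cast hlen) h)

theorem IsPath.eq_of_edges_subset {p q : G.Walk u v} (hp : p.IsPath) (hq : q.IsPath)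
    (h : p.edges ⊆ q.edges) : p = q := by
  induction p with
  | nil => exact (isPath_iff_nil.mp hq).eq_nil.symm
  | @cons u x v hadj p ih =>
    rw [cons_isPath_iff] at hp
    cases q with
    | nil => exact absurd p.end_mem_support hp.2
    | @cons _ y _ hadj' q =>
      rw [cons_isPath_iff] at hq
      rw [edges_cons, edges_cons] at h
      have hxy : x = y := by
        rcases List.mem_cons.mp (h List.mem_cons_self) with he | he
        · exact Sym2.congr_right.mp he
        · exact absurd (fst_mem_support_of_mem_edges q he) hq.2
      subst hxy
      have hsub : p.edges ⊆ q.edges := fun e he ↦ by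
        rcases List.mem_cons.mp (h (List.mem_cons_of_mem _ he)) with rfl | he'
        · exact absurd (fst_mem_support_of_mem_edges p he) hp.2
        · exact he'
      rw [ih hp.1 hq.1 hsub]

theorem IsPath.start_notMem_support_tail {p : G.Walk u v} (hp : p.IsPath) :
    u ∉ p.support.tail :=
  (List.nodup_cons.mp (cons_tail_support p ▸ hp.support_nodup)).1

theorem IsPath.isCycle_append_of_length_add_le_egirth [DecidableEq V] {p : G.Walk u v}
    {q : G.Walk v u} (hp : p.IsPath) (hq : q.IsPath) (hne : p ≠ q.reverse)
    (h : ((p.length + q.length : ℕ) : ℕ∞) ≤ G.egirth) : (p.append q).IsCycle := by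
  obtain ⟨_, -, -, c, hc, hlen⟩ := hp.exists_isCycle_length_le_add_of_ne hq.reverse hne
  have := hc.three_le_length
  rw [length_reverse] at hlen
  refine hp.isCycle_append hq (fun x hxp hxq ↦ ?_) (by omega)
  have hxp' := List.mem_of_mem_tail hxp
  have hxq' := List.mem_of_mem_tail hxq
  have hxu : x ≠ u := fun hx ↦ hp.start_notMem_support_tail (hx ▸ hxp)
  have hxv : x ≠ v := fun hx ↦ hq.start_notMem_support_tail (hx ▸ hxq)
  have h₁ : p.takeUntil x hxp' = (q.dropUntil x hxq').reverse := by
    refine (hp.takeUntil hxp').eq_of_length_add_lt_egirth (hq.dropUntil hxq').reverse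
      (lt_of_lt_of_le ?_ h)
    have := length_takeUntil_lt_length hxp' hxv
    have := q.length_dropUntil_le_length hxq'
    rw [length_reverse]
    exact_mod_cast (by omega)
  have h₂ : p.dropUntil x hxp' = (q.takeUntil x hxq').reverse := by
    refine (hp.dropUntil hxp').eq_of_length_add_lt_egirth (hq.takeUntil hxq').reverse
      (lt_of_lt_of_le ?_ h)
    have := length_dropUntil_lt_length hxp' hxu
    have := q.length_takeUntil_le_length hxq'
    rw [length_reverse]
    exact_mod_cast (by omega)
  exact hne (by rw [← take_spec p hxp', h₁, h₂, ← reverse_append, take_spec])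

theorem support_subset_support_of_edges_subset {u' v' : V} {p : G.Walk u v} {c : G.Walk u' v'}
    (hp : ¬p.Nil) (h : p.edges ⊆ c.edges) : p.support ⊆ c.support := fun _ hw ↦ by
  obtain ⟨e, he, hwe⟩ := (mem_support_iff_exists_mem_edges_of_not_nil hp).mp hw
  exact mem_support_iff_exists_mem_edges.mpr (.inr ⟨e, h he, hwe⟩)

theorem IsCycle.exists_isPath_append_edges_perm [DecidableEq V] {w a b : V} {c : G.Walk w w}
    (hc : c.IsCycle) (ha : a ∈ c.support) (hb : b ∈ c.support) (hab : a ≠ b) :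
    ∃ (r₁ : G.Walk a b) (r₂ : G.Walk b a), r₁.IsPath ∧ r₂.IsPath ∧
      (r₁.append r₂).edges.Perm c.edges := by
  have hb' : b ∈ (c.rotate a ha).support := (mem_support_rotate_iff ..).mpr hb
  have hc' := take_spec _ hb' ▸ hc.rotate ha
  refine ⟨_, _, hc'.isPath_of_append_left (not_nil_of_ne hab.symm),
    hc'.isPath_of_append_right (not_nil_of_ne hab), ?_⟩
  rw [take_spec]
  exact (rotate_edges c a ha).perm

theorem IsPath.edges_union_eq_of_edges_subset_append [DecidableEq V] {p r₁ : G.Walk u v}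
    {q r₂ : G.Walk v u} (hp : p.IsPath) (hq : q.IsPath) (hr₁ : r₁.IsPath) (hr₂ : r₂.IsPath)
    (hlt : q.length < p.length) (hg : ((p.length + q.length : ℕ) : ℕ∞) ≤ G.egirth)
    (hlen : r₁.length + r₂.length = p.length + q.length) (hsub : p.edges ⊆ r₁.edges ++ r₂.edges) :
    r₁.edges.toFinset ∪ r₂.edges.toFinset = p.edges.toFinset ∪ q.edges.toFinset := by
  wlog hr₂p : r₂.length < p.length generalizing u v p q r₁ r₂
  · have key := this hp.reverse hq.reverse hr₂ hr₁ (by simpa) (by simpa using hg)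
      (by simp only [length_reverse]; omega) (by simpa [List.subset_def, or_comm] using hsub)
      (by simp only [length_reverse]; omega)
    simpa [Finset.union_comm] using key
  have hr₂q : r₂ = q := hr₂.eq_of_length_add_lt_egirth hq
    (lt_of_lt_of_le (by exact_mod_cast (by omega)) hg)
  subst hr₂q
  have hne : p ≠ r₂.reverse := ne_of_apply_ne length (by rw [length_reverse]; omega)
  have hnodup := (hp.isCycle_append_of_length_add_le_egirth hq hne hg).edges_nodup
  rw [edges_append, List.nodup_append'] at hnodup
  rw [← hp.eq_of_edges_subset hr₁ fun e he ↦
    (List.mem_append.mp (hsub he)).resolve_right (hnodup.2.2 he)]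

end SimpleGraph.Walk

namespace SimpleGraph

open Walk

variable {V : Type*} {G : SimpleGraph V}

theorem exists_isPath_length_five_of_isPath_length_seven (hbip : G.Colorable 2)
    (hg : 12 ≤ G.egirth) {a b : V} {p : G.Walk a b} (hp : p.IsPath) (hlen : p.length = 7)
    (hdist : G.dist b a ≤ 6) : ∃ q : G.Walk b a, q.IsPath ∧ q.length = 5 := by
  obtain ⟨q, hq, hqd⟩ := p.reverse.reachable.exists_path_of_dist
  refine ⟨q, hq, ?_⟩
  have heven : Even (p.append q).length := two_colorable_iff_forall_loop_even.mp hbip a _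
  have hne : p.reverse ≠ q := ne_of_apply_ne length (by rw [length_reverse]; omega)
  have hlong : ¬ p.length + q.length < 12 := fun h ↦ hne <| hp.reverse.eq_of_length_add_lt_egirth hq
    (lt_of_lt_of_le (by rw [length_reverse]; exact_mod_cast h) hg)
  rw [length_append, Nat.even_iff] at heven
  omega

end SimpleGraph

open SimpleGraph Walk

/-- In a bipartite graph of diameter 6 and girth 12, every path on 8 vertices
(a path of length 7) is a subgraph of exactly one 12-cycle, where cycles are
identified with their edge sets (rotations and reflections count once). -/
theorem path_length_seven_in_unique_twelve_cycle {V : Type u} [DecidableEq V]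
    (G : SimpleGraph V) (hbip : G.Colorable 2)
    (hdiam : G.diam = 6) (hgirth : G.girth = 12)
    {a b : V} (p : G.Walk a b) (hp : p.IsPath) (hlen : p.length = 7) :
    ∃! s : Finset (Sym2 V),
      (∃ (w : V) (c : G.Walk w w), c.IsCycle ∧ c.length = 12 ∧ c.edges.toFinset = s) ∧
      p.edges.toFinset ⊆ s := by
  have hg : 12 ≤ G.egirth :=
    le_egirth.mpr fun _ _ hc ↦ by exact_mod_cast hgirth ▸ girth_le_length hc
  have hdist : G.dist b a ≤ 6 := hdiam ▸ dist_le_diam (ediam_ne_top_of_diam_ne_zero (by omega))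
  obtain ⟨q, hq, hq5⟩ := exists_isPath_length_five_of_isPath_length_seven hbip hg hp hlen hdist
  have hlt : q.length < p.length := by omega
  have hpq : ((p.length + q.length : ℕ) : ℕ∞) ≤ G.egirth := by rw [hlen, hq5]; exact hg
  have hcyc := hp.isCycle_append_of_length_add_le_egirth hq
    (ne_of_apply_ne length (by rw [length_reverse]; omega)) hpq
  refine ⟨(p.append q).edges.toFinset,
    ⟨⟨a, p.append q, hcyc, by simp [hlen, hq5], rfl⟩, by simp [edges_append]⟩, ?_⟩
  rintro _ ⟨⟨w, c, hc, hc12, rfl⟩, hsub⟩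
  have hsub' : p.edges ⊆ c.edges := fun e he ↦ by simpa using hsub (by simpa using he)
  have hpnil : ¬p.Nil := not_nil_iff_lt_length.mpr (by omega)
  have hab : a ≠ b := by rintro rfl; exact hpnil (isPath_iff_nil.mp hp)
  have hsupp := support_subset_support_of_edges_subset hpnil hsub'
  obtain ⟨r₁, r₂, hr₁, hr₂, hperm⟩ := hc.exists_isPath_append_edges_perm
    (hsupp p.start_mem_support) (hsupp p.end_mem_support) hab
  rw [← List.toFinset_eq_of_perm _ _ hperm, edges_append, List.toFinset_append, edges_append,
    List.toFinset_append]
  refine hp.edges_union_eq_of_edges_subset_append hq hr₁ hr₂ hlt hpq ?_ ?_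
  · have := hperm.length_eq
    simp only [edges_append, List.length_append, length_edges] at this
    omega
  · exact fun e he ↦ edges_append r₁ r₂ ▸ hperm.mem_iff.mpr (hsub' he)
end

section
/- Let G be an r-regular simple graph on n vertices with girth at least 9, and let φ be a proper edge coloring of G. Then the number of distinct rainbow paths of length 7 (paths with 8 vertices all of whose 7 edges receive distinct colors) in G is at least (1/2)·n·r·(r−1)·(r−2)·(r−3)·(r−4)·(r−5)·(r−6). -/
/-!
Grow rainbow paths one edge at a time at their start vertex `u`. A path of length `k` uses
`k` colours, and by properness at most `k` edges at `u` carry one of them. Every other neighbour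
`w` of `u` is off the path: otherwise the segment of the path from `u` to `w` closes up with
the edge `wu` into a cycle of length at most `k + 1 < 9`. So a rainbow path of length `k ≤ 6`
has at least `r - k` rainbow extensions, and there are at least `n r (r-1) ⋯ (r-6)` oriented
rainbow paths of length 7. A path is determined by its edge set and its start, which has to be
one of the two vertices of degree one in that edge set, so each edge set arises at most twice.
-/

open SimpleGraph

open Finset

section

variable {V C : Type*} {G : SimpleGraph V} {φ : Sym2 V → C}

namespace SimpleGraph.Walk

variable {u v w : V}

lemma IsPath.mk_mem_edges_of_adj {p : G.Walk u v} (hp : p.IsPath)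
    (hg : p.length + 2 ≤ G.egirth) (h : G.Adj u w) (hw : w ∈ p.support) : s(u, w) ∈ p.edges := by
  classical
  by_contra hne
  have hcycle : (cons h.symm (p.takeUntil w hw)).IsCycle :=
    (cons_isCycle_iff _ h.symm).mpr
      ⟨hp.takeUntil hw, fun he => hne (Sym2.eq_swap ▸ p.edges_takeUntil_subset_edges hw he)⟩
  have hlen := p.length_takeUntil_le_length hw
  have := hg.trans (egirth_le_length hcycle)
  simp only [length_cons] at this
  norm_cast at this
  omega

lemma IsPath.start_eq_or_eq_of_mem_edges_iff {u' v' : V} {p : G.Walk u v} {q : G.Walk u' v'}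
    (hp : p.IsPath) (hq : q.IsPath) (hq' : ¬ q.Nil) (h : ∀ e, e ∈ p.edges ↔ e ∈ q.edges) :
    u' = u ∨ u' = v := by
  obtain ⟨i, rfl, hi⟩ := mem_support_iff_exists_getVert.mp
    (p.fst_mem_support_of_mem_edges ((h _).mpr (q.mk_start_snd_mem_edges hq')))
  by_contra! hend
  have hi0 : i ≠ 0 := fun h0 => hend.1 (h0 ▸ p.getVert_zero)
  have hil : i < p.length := lt_of_le_of_ne hi fun hl => hend.2 (hl ▸ p.getVert_length)
  have hnbr : p.toSubgraph.neighborSet (p.getVert i) = q.toSubgraph.neighborSet (p.getVert i) := by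
    ext x
    simp only [Subgraph.mem_neighborSet, adj_toSubgraph_iff_mem_edges, h]
  have := hp.ncard_neighborSet_toSubgraph_internal_eq_two hi0 hil
  rw [hnbr, hq.neighborSet_toSubgraph_startpoint hq'] at this
  simp at this

lemma IsPath.sigma_eq_of_mem_edges_iff {v' : V} {p : G.Walk u v} {q : G.Walk u v'}
    (hp : p.IsPath) (hq : q.IsPath) (h : ∀ e, e ∈ p.edges ↔ e ∈ q.edges) :
    (⟨v, p⟩ : Σ w, G.Walk u w) = ⟨v', q⟩ := by
  induction p with
  | nil =>
    cases q with
    | nil => rfl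
    | cons hadj q => simpa using (h _).mpr (List.mem_cons_self ..)
  | @cons u x v hadj p ih =>
    cases q with
    | nil => simpa using (h _).mp (List.mem_cons_self ..)
    | @cons _ y _ hadj' q =>
      rw [cons_isPath_iff] at hp hq
      have hyx : y = x := by
        have : s(u, y) ∈ s(u, x) :: p.edges := (h _).mpr (by simp)
        rcases List.mem_cons.mp this with he | he
        · simpa [hadj.ne] using he
        · exact absurd (p.fst_mem_support_of_mem_edges he) hp.2
      subst hyx
      have htail : ∀ e, e ∈ p.edges ↔ e ∈ q.edges := by
        intro e
        have hpe : e ∈ p.edges → e ≠ s(u, y) := fun he h' =>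
          hp.2 (p.fst_mem_support_of_mem_edges (h' ▸ he))
        have hqe : e ∈ q.edges → e ≠ s(u, y) := fun he h' =>
          hq.2 (q.fst_mem_support_of_mem_edges (h' ▸ he))
        have := h e
        simp only [edges_cons, List.mem_cons] at this
        grind
      obtain ⟨rfl, hpq⟩ := Sigma.mk.inj_iff.mp (ih hp.1 hq.1 htail)
      rw [heq_iff_eq.mp hpq]

end SimpleGraph.Walk

lemma card_le_two_mul_card_image_edges [DecidableEq V] (A : Finset (Σ v u, G.Walk u v))
    (hA : ∀ x ∈ A, x.2.2.IsPath ∧ ¬ x.2.2.Nil) :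
    #A ≤ 2 * #(A.image fun x => x.2.2.edges.toFinset) := by
  refine card_le_mul_card_image A 2 fun s hs => ?_
  obtain ⟨x, hx, rfl⟩ := mem_image.mp hs
  set F := {y ∈ A | y.2.2.edges.toFinset = x.2.2.edges.toFinset}
  have hF {y} (hy : y ∈ F) :
      y.2.2.IsPath ∧ ¬ y.2.2.Nil ∧ ∀ e, e ∈ x.2.2.edges ↔ e ∈ y.2.2.edges := by
    obtain ⟨hyA, hyx⟩ := mem_filter.mp hy
    exact ⟨(hA y hyA).1, (hA y hyA).2, fun e => by simpa using (Finset.ext_iff.mp hyx e).symm⟩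
  have hstart : Set.MapsTo (fun y : Σ v u, G.Walk u v => y.2.1) F
      ({x.2.1, x.1} : Finset V) := fun y hy => by
    obtain ⟨hp, hnil, hedges⟩ := hF hy
    simpa using (hA x hx).1.start_eq_or_eq_of_mem_edges_iff hp hnil hedges
  have hinj : Set.InjOn (fun y : Σ v u, G.Walk u v => y.2.1) F := by
    rintro ⟨v, u, p⟩ hy ⟨v', u', p'⟩ hy' (rfl : u = u')
    obtain ⟨hp, -, hedges⟩ := hF hy
    obtain ⟨hp', -, hedges'⟩ := hF hy'
    obtain ⟨rfl, h⟩ := Sigma.mk.inj_iff.mp <|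
      hp.sigma_eq_of_mem_edges_iff hp' fun e => (hedges e).symm.trans (hedges' e)
    cases h
    rfl
  calc #F ≤ #({x.2.1, x.1} : Finset V) := card_le_card_of_injOn _ hstart hinj
    _ ≤ 2 := card_le_two

lemma IsProperEdgeColoring.injective_neighborSet (hφ : IsProperEdgeColoring G φ) (u : V) :
    Function.Injective fun w : G.neighborSet u => φ s(u, w) := by
  rintro ⟨w, hw⟩ ⟨w', hw'⟩ heq
  by_contra hne
  exact hφ hw hw' (mt Sym2.congr_right.mp fun h => hne (Subtype.ext h)) ⟨u, by simp, by simp⟩ heq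

lemma IsProperEdgeColoring.sub_length_le_card_filter_color_notMem [Fintype V]
    [DecidableRel G.Adj] [DecidableEq C] (hφ : IsProperEdgeColoring G φ) {r : ℕ}
    (hreg : G.IsRegularOfDegree r) {u v : V} (p : G.Walk u v) :
    r - p.length ≤ #{w : G.neighborSet u | φ s(u, w) ∉ p.edges.map φ} := by
  have hused : #{w : G.neighborSet u | φ s(u, w) ∈ p.edges.map φ} ≤ p.length :=
    calc _ ≤ #(p.edges.map φ).toFinset :=
          card_le_card_of_injOn _ (fun w hw => by simpa using hw)
            (hφ.injective_neighborSet u).injOn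
      _ ≤ (p.edges.map φ).length := List.toFinset_card_le _
      _ = p.length := by simp
  have := card_filter_add_card_filter_not (s := univ)
    (fun w : G.neighborSet u => φ s(u, w) ∈ p.edges.map φ)
  rw [card_univ, card_neighborSet_eq_degree, hreg u] at this
  omega

variable [Fintype V] [DecidableEq V] [DecidableRel G.Adj] [DecidableEq C]

variable (G φ) in
/-- Paths are grown at their start by `Walk.cons`, so the end `v` is fixed and the start is
the first component. -/
def rainbowPathsTo (k : ℕ) (v : V) : Finset (Σ u, G.Walk u v) :=
  univ.sigma fun u => {p ∈ G.finsetWalkLength k u v | p.IsPath ∧ (p.edges.map φ).Nodup}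

@[simp]
lemma mem_rainbowPathsTo {k : ℕ} {v : V} {x : Σ u, G.Walk u v} :
    x ∈ rainbowPathsTo G φ k v ↔ x.2.length = k ∧ x.2.IsPath ∧ (x.2.edges.map φ).Nodup := by
  simp [rainbowPathsTo, mem_finsetWalkLength_iff]

lemma card_rainbowPathsTo_mul_le_card_succ (hφ : IsProperEdgeColoring G φ) {r : ℕ}
    (hreg : G.IsRegularOfDegree r) {k : ℕ} (hg : k + 2 ≤ G.egirth) (v : V) :
    #(rainbowPathsTo G φ k v) * (r - k) ≤ #(rainbowPathsTo G φ (k + 1) v) := by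
  let fresh (x : Σ u, G.Walk u v) : Finset (G.neighborSet x.1) :=
    {w | φ s(x.1, w) ∉ x.2.edges.map φ}
  let extend (y : Σ x : Σ u, G.Walk u v, G.neighborSet x.1) : Σ u, G.Walk u v :=
    ⟨y.2, Walk.cons (G.adj_symm y.2.2) y.1.2⟩
  have hinj : Set.InjOn extend ((rainbowPathsTo G φ k v).sigma fresh) := by
    rintro ⟨⟨u, p⟩, w, hw⟩ - ⟨⟨u', p'⟩, w', hw'⟩ - h
    obtain ⟨rfl, h⟩ := Sigma.mk.inj_iff.mp h
    obtain ⟨rfl, h⟩ := Walk.cons.inj (eq_of_heq h)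
    cases h
    rfl
  have hmaps : Set.MapsTo extend ((rainbowPathsTo G φ k v).sigma fresh)
      (rainbowPathsTo G φ (k + 1) v) := by
    rintro ⟨⟨u, p⟩, w, hw⟩ hy
    simp only [coe_sigma, Set.mem_sigma_iff, mem_coe, mem_rainbowPathsTo, fresh,
      mem_filter_univ] at hy
    obtain ⟨⟨rfl, hp, hrainbow⟩, hnew⟩ := hy
    have hw_notMem : w ∉ p.support := fun hmem =>
      hnew (List.mem_map_of_mem (hp.mk_mem_edges_of_adj (by simpa using hg) hw hmem))
    rw [mem_coe, mem_rainbowPathsTo]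
    refine ⟨rfl, (Walk.cons_isPath_iff _ _).mpr ⟨hp, hw_notMem⟩, ?_⟩
    rw [Walk.edges_cons, List.map_cons, List.nodup_cons, Sym2.eq_swap]
    exact ⟨hnew, hrainbow⟩
  calc #(rainbowPathsTo G φ k v) * (r - k)
      = ∑ x ∈ rainbowPathsTo G φ k v, (r - k) := by rw [sum_const, smul_eq_mul]
    _ ≤ ∑ x ∈ rainbowPathsTo G φ k v, #(fresh x) := by
      refine sum_le_sum fun x hx => ?_
      rw [← (mem_rainbowPathsTo.mp hx).1]
      exact hφ.sub_length_le_card_filter_color_notMem hreg x.2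
    _ = #((rainbowPathsTo G φ k v).sigma fresh) := (card_sigma _ _).symm
    _ ≤ #(rainbowPathsTo G φ (k + 1) v) := card_le_card_of_injOn extend hmaps hinj

lemma descFactorial_le_card_rainbowPathsTo (hφ : IsProperEdgeColoring G φ) {r : ℕ}
    (hreg : G.IsRegularOfDegree r) {k : ℕ} (hg : k + 1 ≤ G.egirth) (v : V) :
    r.descFactorial k ≤ #(rainbowPathsTo G φ k v) := by
  induction k with
  | zero => exact card_pos.mpr ⟨⟨v, Walk.nil⟩, by simp⟩
  | succ k ih =>
    push_cast at hg
    rw [Nat.descFactorial_succ, mul_comm]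
    calc r.descFactorial k * (r - k) ≤ #(rainbowPathsTo G φ k v) * (r - k) :=
          Nat.mul_le_mul_right _ (ih (le_trans (by gcongr; norm_num) hg))
      _ ≤ _ := card_rainbowPathsTo_mul_le_card_succ hφ hreg
          (by rwa [add_assoc, one_add_one_eq_two] at hg) v

end

/-- In an `r`-regular graph on `n` vertices with girth at least 9, equipped with
a proper edge coloring, the number of distinct rainbow paths of length 7 (a path
and its reversal counted once, identified with their edge sets) is at least
`(1/2) · n · r · (r-1) · (r-2) · (r-3) · (r-4) · (r-5) · (r-6)`. -/
theorem count_rainbow_paths_length_seven {V : Type u} [Fintype V] [DecidableEq V]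
    (G : SimpleGraph V) [DecidableRel G.Adj] {r : ℕ}
    (hreg : G.IsRegularOfDegree r) (hgirth : (9 : ℕ∞) ≤ G.egirth)
    {C : Type v} (φ : Sym2 V → C) (hproper : IsProperEdgeColoring G φ) :
    Fintype.card V * r * (r - 1) * (r - 2) * (r - 3) * (r - 4) * (r - 5) * (r - 6)
      ≤ 2 * ({s : Finset (Sym2 V) | ∃ (u v : V) (p : G.Walk u v),
          p.IsPath ∧ p.length = 7 ∧ (p.edges.map φ).Nodup ∧
          p.edges.toFinset = s}).ncard := by
  classical
  let A := univ.sigma (rainbowPathsTo G φ 7)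
  have hA (x) (hx : x ∈ A) := mem_rainbowPathsTo.mp (mem_sigma.mp hx).2
  have himage : ↑(A.image fun x => x.2.2.edges.toFinset) ⊆ {s : Finset (Sym2 V) |
      ∃ (u v : V) (p : G.Walk u v),
        p.IsPath ∧ p.length = 7 ∧ (p.edges.map φ).Nodup ∧ p.edges.toFinset = s} := by
    rintro _ hs
    obtain ⟨x, hx, rfl⟩ := mem_image.mp hs
    exact ⟨_, _, x.2.2, (hA x hx).2.1, (hA x hx).1, (hA x hx).2.2, rfl⟩
  calc Fintype.card V * r * (r - 1) * (r - 2) * (r - 3) * (r - 4) * (r - 5) * (r - 6)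
      = ∑ _v : V, r.descFactorial 7 := by simp [Nat.descFactorial_succ]; ring
    _ ≤ ∑ v : V, #(rainbowPathsTo G φ 7 v) := sum_le_sum fun v _ =>
        descFactorial_le_card_rainbowPathsTo hproper hreg (le_trans (by norm_num) hgirth) v
    _ = #A := (card_sigma _ _).symm
    _ ≤ 2 * #(A.image fun x => x.2.2.edges.toFinset) :=
        card_le_two_mul_card_image_edges A fun x hx =>
          ⟨(hA x hx).2.1, by simp [← Walk.length_eq_zero_iff, (hA x hx).1]⟩
    _ ≤ _ := by
        rw [← Set.ncard_coe_finset]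
        exact Nat.mul_le_mul_left 2 (Set.ncard_le_ncard himage)
end

section
/- Let G be a bipartite simple graph with vertex bipartition (A, B) in which every vertex of A has degree q+1 and every vertex of B has degree q²+1, and suppose G has girth at least 11. Then the number of distinct paths of length 9 (paths with 10 vertices) in G equals |A|·q^12·(q+1). -/
/-!
Orient every path of length 9 so that it ends in `A`: an odd path has one end in each part, and
a path is determined by its edge set together with one of its ends, so this orientation is
unique. Grow the oriented paths backwards from their end `v ∈ A`, one vertex at a time. Girth at
least 11 forces every neighbour of the current first vertex, other than the next vertex on the
path, to lie off the path, so after the `q + 1` choices of the first step there are alternately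
`q²` and `q` choices, i.e. `(q + 1) q^12` paths for each `v`.
-/

namespace SimpleGraph

open Finset

variable {V : Type*} {G : SimpleGraph V}

namespace Walk

theorem IsPath.sigma_eq_of_edges_toFinset_eq [DecidableEq V] {u v w : V} {p : G.Walk u v}
    {p' : G.Walk u w} (hp : p.IsPath) (hp' : p'.IsPath)
    (h : p.edges.toFinset = p'.edges.toFinset) :
    (⟨v, p⟩ : Σ x, G.Walk u x) = ⟨w, p'⟩ := by
  induction p generalizing w with
  | nil =>
    cases p' with
    | nil => rfl
    | cons => exact absurd h.symm (by simp)
  | @cons a x _ hadj q ih =>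
    cases p' with
    | nil => simp at h
    | @cons _ x' _ hadj' q' =>
      rw [cons_isPath_iff] at hp hp'
      simp only [edges_cons, List.toFinset_cons] at h
      have hx : s(a, x) = s(a, x') := by
        have := h ▸ Finset.mem_insert_self _ _
        rcases Finset.mem_insert.mp this with he | he
        · exact he
        · exact absurd (q'.fst_mem_support_of_mem_edges (List.mem_toFinset.mp he)) hp'.2
      obtain rfl := Sym2.congr_right.mp hx
      have htail : q.edges.toFinset = q'.edges.toFinset := by
        rw [← Finset.erase_insert (fun he => hp.2 (q.fst_mem_support_of_mem_edges
          (List.mem_toFinset.mp he))), h, Finset.erase_insert (fun he => hp'.2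
          (q'.fst_mem_support_of_mem_edges (List.mem_toFinset.mp he)))]
      obtain ⟨rfl, hq⟩ := Sigma.mk.inj_iff.mp (ih hp.1 hp'.1 htail)
      rw [eq_of_heq hq]

theorem IsPath.start_eq_or_eq_of_edges_toFinset_eq [DecidableEq V] {u v u' v' : V}
    {p : G.Walk u v} {p' : G.Walk u' v'} (hp : p.IsPath) (hp' : p'.IsPath) (hnil : ¬p.Nil)
    (h : p.edges.toFinset = p'.edges.toFinset) : u = u' ∨ u = v' := by
  have hadj : ∀ a b, p.toSubgraph.Adj a b ↔ p'.toSubgraph.Adj a b := by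
    intro a b
    rw [adj_toSubgraph_iff_mem_edges, adj_toSubgraph_iff_mem_edges, ← List.mem_toFinset, h,
      List.mem_toFinset]
  have hnbr : p'.toSubgraph.neighborSet u = {p.snd} := by
    rw [← hp.neighborSet_toSubgraph_startpoint hnil]
    ext b
    exact (hadj u b).symm
  obtain ⟨i, rfl, hi⟩ := mem_support_iff_exists_getVert.mp
    (mem_support_of_adj_toSubgraph ((hadj _ _).mp (p.toSubgraph_adj_snd hnil)))
  rcases Nat.eq_zero_or_pos i with rfl | hpos
  · exact Or.inl p'.getVert_zero
  rcases hi.lt_or_eq with hlt | rfl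
  · have := hp'.ncard_neighborSet_toSubgraph_internal_eq_two hpos.ne' hlt
    rw [hnbr, Set.ncard_singleton] at this
    omega
  · exact Or.inr p'.getVert_length

theorem IsPath.neighborFinset_inter_support_toFinset [DecidableEq V] [Fintype (G.neighborSet u)]
    {p : G.Walk u v} (hp : p.IsPath) (hnil : ¬p.Nil) (hg : ((p.length + 2 : ℕ) : ℕ∞) ≤ G.egirth) :
    G.neighborFinset u ∩ p.support.toFinset = {p.snd} := by
  ext w
  simp only [Finset.mem_inter, mem_neighborFinset, List.mem_toFinset, Finset.mem_singleton]
  refine ⟨fun ⟨huw, hw⟩ => ?_, ?_⟩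
  · by_contra hne
    have hcycle : (cons huw.symm (p.takeUntil w hw)).IsCycle := by
      refine (cons_isCycle_iff _ _).mpr ⟨hp.takeUntil hw, fun he => hne ?_⟩
      refine (hp.snd_of_toSubgraph_adj ?_).symm
      rw [adj_toSubgraph_iff_mem_edges, Sym2.eq_swap]
      exact p.edges_takeUntil_subset_edges hw he
    have hshort := le_egirth.mp hg _ _ hcycle
    have := p.length_takeUntil_le_length hw
    rw [length_cons, Nat.cast_le] at hshort
    omega
  · rintro rfl
    exact ⟨p.adj_snd hnil, p.getVert_mem_support 1⟩

theorem IsPath.card_neighborFinset_sdiff_support_toFinset [DecidableEq V]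
    [Fintype (G.neighborSet u)] {p : G.Walk u v} (hp : p.IsPath) (hnil : ¬p.Nil)
    (hg : ((p.length + 2 : ℕ) : ℕ∞) ≤ G.egirth) :
    #(G.neighborFinset u \ p.support.toFinset) = G.degree u - 1 := by
  rw [card_sdiff, inter_comm, hp.neighborFinset_inter_support_toFinset hnil hg, card_singleton,
    card_neighborFinset_eq_degree]

theorem even_length_iff_mem_iff_mem {A : Set V} (hA : ∀ ⦃x y⦄, G.Adj x y → (x ∈ A ↔ y ∉ A))
    {u v : V} (p : G.Walk u v) : Even p.length ↔ (u ∈ A ↔ v ∈ A) := by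
  induction p with
  | nil => simp
  | cons h p ih =>
    rw [length_cons, Nat.even_add_one, ih, hA h]
    tauto

theorem mem_iff_notMem_of_odd_length {A : Set V} (hA : ∀ ⦃x y⦄, G.Adj x y → (x ∈ A ↔ y ∉ A))
    {u v : V} (p : G.Walk u v) (hp : Odd p.length) : u ∈ A ↔ v ∉ A := by
  have := p.even_length_iff_mem_iff_mem hA
  rw [← Nat.not_even_iff_odd] at hp
  tauto

end Walk

variable [Fintype V] [DecidableEq V] [DecidableRel G.Adj]

variable (G) in
def pathsTo (n : ℕ) (v : V) : Finset (Σ u, G.Walk u v) :=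
  univ.sigma fun u => {p ∈ G.finsetWalkLength n u v | p.IsPath}

@[simp]
theorem mem_pathsTo {n : ℕ} {v : V} {x : Σ u, G.Walk u v} :
    x ∈ G.pathsTo n v ↔ x.2.IsPath ∧ x.2.length = n := by
  simp [pathsTo, mem_finsetWalkLength_iff, and_comm]

theorem card_pathsTo_succ (n : ℕ) (v : V) :
    #(G.pathsTo (n + 1) v) =
      ∑ x ∈ G.pathsTo n v, #(G.neighborFinset x.1 \ x.2.support.toFinset) := by
  rw [← card_sigma]
  refine (card_bij (fun y hy => ⟨y.2, Walk.cons ((mem_neighborFinset _ _ _).mp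
    (mem_sdiff.mp (mem_sigma.mp hy).2).1).symm y.1.2⟩) ?_ ?_ ?_).symm
  · rintro ⟨⟨w, p⟩, u⟩ hy
    simp only [mem_sigma, mem_pathsTo, mem_sdiff, List.mem_toFinset] at hy ⊢
    exact ⟨(Walk.cons_isPath_iff _ _).mpr ⟨hy.1.1, hy.2.2⟩, by simp [hy.1.2]⟩
  · rintro ⟨⟨w, p⟩, u⟩ _ ⟨⟨w', p'⟩, u'⟩ _ h
    obtain ⟨rfl, h⟩ := Sigma.mk.inj_iff.mp h
    simp only [heq_eq_eq, Walk.cons.injEq] at h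
    obtain ⟨rfl, hp⟩ := h
    rw [eq_of_heq hp]
  · rintro ⟨u, _ | @⟨_, w, _, hadj, p⟩⟩ hx
    · simp at hx
    · simp only [mem_pathsTo, Walk.cons_isPath_iff, Walk.length_cons] at hx
      refine ⟨⟨⟨w, p⟩, u⟩, ?_, rfl⟩
      simp only [mem_sigma, mem_pathsTo, mem_sdiff, mem_neighborFinset, List.mem_toFinset]
      exact ⟨⟨hx.1.1, by omega⟩, hadj.symm, hx.1.2⟩

theorem card_pathsTo_one (v : V) : #(G.pathsTo 1 v) = G.degree v := by
  have hzero : G.pathsTo 0 v = {⟨v, .nil⟩} := by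
    ext ⟨u, p⟩
    simp only [mem_pathsTo, mem_singleton]
    constructor
    · rintro ⟨-, hlen⟩
      cases p with
      | nil => rfl
      | cons => simp at hlen
    · rintro h
      cases h
      exact ⟨Walk.IsPath.nil, rfl⟩
  rw [card_pathsTo_succ, hzero, sum_singleton, Walk.support_nil, List.toFinset_cons,
    List.toFinset_nil, insert_empty, sdiff_singleton_eq_erase, erase_eq_of_notMem (by simp),
    card_neighborFinset_eq_degree]

theorem card_pathsTo_succ_of_degree_eq {n d : ℕ} {v : V} (hn : n ≠ 0)
    (hg : ((n + 2 : ℕ) : ℕ∞) ≤ G.egirth) (hdeg : ∀ x ∈ G.pathsTo n v, G.degree x.1 = d + 1) :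
    #(G.pathsTo (n + 1) v) = #(G.pathsTo n v) * d := by
  rw [card_pathsTo_succ, sum_const_nat]
  intro ⟨u, p⟩ hx
  rw [mem_pathsTo] at hx
  have hnil : ¬p.Nil := by rw [Walk.not_nil_iff_lt_length, hx.2]; omega
  rw [hx.1.card_neighborFinset_sdiff_support_toFinset hnil (hx.2 ▸ hg),
    hdeg _ (mem_pathsTo.mpr hx)]
  rfl

section Bipartite

variable {A : Set V} (hA : ∀ ⦃x y⦄, G.Adj x y → (x ∈ A ↔ y ∉ A))
include hA

theorem card_pathsTo_two_mul_add_one {a b : ℕ} (hdegA : ∀ x ∈ A, G.degree x = a + 1)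
    (hdegB : ∀ x ∉ A, G.degree x = b + 1) {v : V} (hv : v ∈ A) (k : ℕ)
    (hg : ((2 * k + 2 : ℕ) : ℕ∞) ≤ G.egirth) :
    #(G.pathsTo (2 * k + 1) v) = (a + 1) * (a * b) ^ k := by
  induction k with
  | zero => simp [card_pathsTo_one, hdegA v hv]
  | succ k ih =>
    have hstart : ∀ n, ∀ x ∈ G.pathsTo n v, x.1 ∈ A ↔ Even n := by
      intro n x hx
      rw [← (mem_pathsTo.mp hx).2, x.2.even_length_iff_mem_iff_mem hA]
      simp [hv]
    have hg' : ∀ m ≤ 2 * (k + 1) + 2, (m : ℕ∞) ≤ G.egirth := fun m hm =>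
      le_trans (Nat.cast_le.mpr hm) hg
    have hodd : #(G.pathsTo (2 * k + 2) v) = #(G.pathsTo (2 * k + 1) v) * b :=
      card_pathsTo_succ_of_degree_eq (by omega) (hg' _ (by omega)) fun x hx =>
        hdegB _ ((hstart _ x hx).not.mpr (Nat.not_even_two_mul_add_one k))
    have heven : #(G.pathsTo (2 * k + 3) v) = #(G.pathsTo (2 * k + 2) v) * a :=
      card_pathsTo_succ_of_degree_eq (by omega) (hg' _ (by omega)) fun x hx =>
        hdegA _ ((hstart _ x hx).mpr (by simp [parity_simps]))
    rw [show 2 * (k + 1) + 1 = 2 * k + 3 by ring, heven, hodd, ih (hg' _ (by omega))]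
    ring

theorem injOn_edges_toFinset_pathsTo [Fintype A] {n : ℕ} (hn : Odd n) :
    Set.InjOn (fun x : Σ v, Σ u, G.Walk u v => x.2.2.edges.toFinset)
      ↑(A.toFinset.sigma (G.pathsTo n)) := by
  rintro ⟨v, u, p⟩ hx ⟨v', u', p'⟩ hx' h
  simp only [coe_sigma, Set.mem_sigma_iff, Set.coe_toFinset, mem_coe, mem_pathsTo] at hx hx' h
  obtain ⟨hv, hp, hlen⟩ := hx
  obtain ⟨hv', hp', hlen'⟩ := hx'
  have hu' : u' ∉ A := (p'.mem_iff_notMem_of_odd_length hA (hlen' ▸ hn)).not_left.mpr hv'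
  have hrev : p.reverse.edges.toFinset = p'.reverse.edges.toFinset := by
    simpa only [Walk.edges_reverse, List.toFinset_reverse] using h
  have hnil : ¬p.reverse.Nil := by
    rw [Walk.not_nil_iff_lt_length, Walk.length_reverse, hlen]
    exact hn.pos
  obtain rfl : v = v' := ((hp.reverse.start_eq_or_eq_of_edges_toFinset_eq hp'.reverse hnil
    hrev).resolve_right fun h => hu' (h ▸ hv))
  obtain ⟨rfl, hpp'⟩ := Sigma.mk.inj_iff.mp
    (hp.reverse.sigma_eq_of_edges_toFinset_eq hp'.reverse hrev)
  rw [Walk.reverse_injective (eq_of_heq hpp')]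

theorem setOf_edges_toFinset_isPath_eq_image [Fintype A] {n : ℕ} (hn : Odd n) :
    {s : Finset (Sym2 V) | ∃ (u v : V) (p : G.Walk u v),
        p.IsPath ∧ p.length = n ∧ p.edges.toFinset = s}
      = ↑((A.toFinset.sigma (G.pathsTo n)).image fun x => x.2.2.edges.toFinset) := by
  ext s
  simp only [Set.mem_ofPred_eq, coe_image, coe_sigma, Set.mem_image, Set.mem_sigma_iff,
    Set.coe_toFinset, mem_coe, mem_pathsTo, Sigma.exists]
  constructor
  · rintro ⟨u, v, p, hp, hlen, rfl⟩
    by_cases hv : v ∈ A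
    · exact ⟨v, u, p, ⟨hv, hp, hlen⟩, rfl⟩
    · have hu : u ∈ A := (p.mem_iff_notMem_of_odd_length hA (hlen ▸ hn)).mpr hv
      refine ⟨u, v, p.reverse, ⟨hu, hp.reverse, by simp [hlen]⟩, ?_⟩
      simp only [Walk.edges_reverse, List.toFinset_reverse]
  · rintro ⟨v, u, p, ⟨-, hp, hlen⟩, rfl⟩
    exact ⟨u, v, p, hp, hlen, rfl⟩

end Bipartite

end SimpleGraph

open SimpleGraph

/-- In a bipartite graph with bipartition `(A, B)`, vertices of `A` having degree
`q + 1`, vertices of `B` having degree `q² + 1`, and girth at least 11, the number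
of distinct paths of length 9 (paths on 10 vertices, a path and its reversal
counted once, identified with their edge sets) equals `|A| · q^12 · (q+1)`. -/
theorem count_paths_length_nine {V : Type u} [Fintype V] [DecidableEq V]
    (G : SimpleGraph V) [DecidableRel G.Adj] (q : ℕ) (A B : Set V)
    (hpart : ∀ x : V, (x ∈ A ∧ x ∉ B) ∨ (x ∈ B ∧ x ∉ A))
    (hadj : ∀ ⦃x y : V⦄, G.Adj x y → (x ∈ A ∧ y ∈ B) ∨ (x ∈ B ∧ y ∈ A))
    (hA : ∀ x ∈ A, G.degree x = q + 1)
    (hB : ∀ x ∈ B, G.degree x = q ^ 2 + 1)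
    (hgirth : (11 : ℕ∞) ≤ G.egirth) :
    ({s : Finset (Sym2 V) | ∃ (u v : V) (p : G.Walk u v),
        p.IsPath ∧ p.length = 9 ∧ p.edges.toFinset = s}).ncard
      = A.ncard * q ^ 12 * (q + 1) := by
  classical
  have hcross : ∀ ⦃x y⦄, G.Adj x y → (x ∈ A ↔ y ∉ A) := by
    intro x y h
    rcases hadj h with hxy | hxy <;> rcases hpart x with hx | hx <;>
      rcases hpart y with hy | hy <;> tauto
  have hdegB : ∀ x ∉ A, G.degree x = q ^ 2 + 1 := fun x hx =>
    hB x (((hpart x).resolve_left fun h => hx h.1).1)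
  have hodd : Odd 9 := by decide
  rw [setOf_edges_toFinset_isPath_eq_image hcross hodd, Set.ncard_coe_finset,
    Finset.card_image_of_injOn (injOn_edges_toFinset_pathsTo hcross hodd), Finset.card_sigma,
    Finset.sum_const_nat fun v hv => card_pathsTo_two_mul_add_one hcross hA hdegB
      (Set.mem_toFinset.mp hv) 4 (le_trans (by norm_num) hgirth),
    ← Set.ncard_eq_toFinset_card']
  ring
end

section
/- Let G be a simple graph and suppose G has a matching M (a set of pairwise nonadjacent edges) such that every cycle of G contains at least two edges of M. Then G is PRCF-good: G admits a proper edge coloring in which no cycle is rainbow. (In particular, for any graph H and any k ≥ 2, the k-fold subdivision of H is PRCF-good, by taking M to consist of one edge joining two degree-2 subdivision vertices on each subdivided edge.) -/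
open SimpleGraph

/-- A graph is PRCF-good if it admits a proper edge coloring in which no cycle is
rainbow (i.e. every cycle has two edges of the same color). -/
def PRCFGood {V : Type u} (G : SimpleGraph V) : Prop :=
  ∃ (C : Type u) (φ : Sym2 V → C), IsProperEdgeColoring G φ ∧
    ∀ (u : V) (c : G.Walk u u), c.IsCycle → ¬ (c.edges.map φ).Nodup

/-- If a graph `G` has a matching `M` (a set of pairwise nonadjacent edges) such
that every cycle of `G` contains at least two edges of `M`, then `G` is
PRCF-good. -/
theorem PRCFGood_of_matching_meeting_cycles_twice {V : Type u} (G : SimpleGraph V)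
    (M : Set (Sym2 V)) (hM : M ⊆ G.edgeSet)
    (hmatching : ∀ e₁ ∈ M, ∀ e₂ ∈ M, e₁ ≠ e₂ → ¬ ∃ v : V, v ∈ e₁ ∧ v ∈ e₂)
    (hcycles : ∀ (u : V) (c : G.Walk u u), c.IsCycle →
      ∃ e₁ ∈ M, ∃ e₂ ∈ M, e₁ ≠ e₂ ∧ e₁ ∈ c.edges ∧ e₂ ∈ c.edges) :
    PRCFGood G := by
  classical
  refine ⟨Option (Sym2 V), fun e => if e ∈ M then none else some e, ?_, ?_⟩
  · intro e₁ e₂ h₁ h₂ hne hshare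
    by_cases m₁ : e₁ ∈ M <;> by_cases m₂ : e₂ ∈ M <;> simp [m₁, m₂]
    · exact absurd hshare (hmatching e₁ m₁ e₂ m₂ hne)
    · exact hne
  · intro u c hc hnd
    obtain ⟨e₁, m₁, e₂, m₂, hne, he₁, he₂⟩ := hcycles u c hc
    exact hne (List.inj_on_of_nodup_map hnd he₁ he₂ (by simp [m₁, m₂]))
end

section
/- For every n ≥ 4, the complete bipartite graph K_{2,n} is PRCF-bad: every proper edge coloring of K_{2,n} contains a rainbow 4-cycle. -/
open SimpleGraph

/-!
Let `a ≠ b` have at least four common neighbours and fix one of them, `x`. For another common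
neighbour `y`, properness already separates consecutive edges of the 4-cycle `a x b y`, so it is
rainbow unless `by` has the colour of `ax` or `ya` has the colour of `xb`. Properness at `b`,
resp. `a`, allows at most one such `y` each, so one of the at least three remaining common
neighbours gives a rainbow 4-cycle. In `K_{2,n}` the two vertices of the small side have `n`
common neighbours.
-/

namespace SimpleGraph

variable {V : Type u} {G : SimpleGraph V}

theorem Walk.isCycle_four {a x b y : V} (hax : G.Adj a x) (hxb : G.Adj x b) (hby : G.Adj b y)
    (hya : G.Adj y a) (hab : a ≠ b) (hxy : x ≠ y) :
    (cons hax (cons hxb (cons hby (cons hya nil)))).IsCycle := by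
  have := hax.ne; have := hxb.ne; have := hby.ne; have := hya.ne
  simp [Walk.cons_isCycle_iff, Walk.cons_isPath_iff, *, Ne.symm]

theorem commonNeighbors_inl_completeBipartiteGraph {V W : Type*} (i j : V) :
    (completeBipartiteGraph V W).commonNeighbors (.inl i) (.inl j) = Set.range Sum.inr := by
  ext (v | w) <;> simp [mem_commonNeighbors]

end SimpleGraph

namespace IsProperEdgeColoring

variable {V : Type u} {C : Type v} {G : SimpleGraph V} {φ : Sym2 V → C}

theorem apply_ne_s17 (hφ : IsProperEdgeColoring G φ) {u v w : V} (huv : G.Adj u v) (hvw : G.Adj v w)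
    (huw : u ≠ w) : φ s(u, v) ≠ φ s(v, w) :=
  hφ huv hvw (by simp [huw, huv.ne]) ⟨v, by simp, by simp⟩

theorem subsingleton_setOf_adj_apply_eq (hφ : IsProperEdgeColoring G φ) (v : V) (c : C) :
    {w | G.Adj v w ∧ φ s(v, w) = c}.Subsingleton := by
  rintro w ⟨hvw, hw⟩ w' ⟨hvw', hw'⟩
  by_contra hne
  exact hφ.apply_ne_s17 hvw.symm hvw' hne (by rw [Sym2.eq_swap, hw, hw'])

theorem exists_rainbow_four_cycle_of_ne (hφ : IsProperEdgeColoring G φ) {a x b y : V}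
    (hax : G.Adj a x) (hxb : G.Adj x b) (hby : G.Adj b y) (hya : G.Adj y a)
    (hab : a ≠ b) (hxy : x ≠ y) (h₁ : φ s(a, x) ≠ φ s(b, y)) (h₂ : φ s(x, b) ≠ φ s(y, a)) :
    ∃ (u : V) (c : G.Walk u u), c.IsCycle ∧ c.length = 4 ∧ (c.edges.map φ).Nodup := by
  refine ⟨a, _, Walk.isCycle_four hax hxb hby hya hab hxy, rfl, ?_⟩
  have h₁₄ : φ s(a, x) ≠ φ s(y, a) := by
    simpa [Sym2.eq_swap] using hφ.apply_ne_s17 hax.symm hya.symm hxy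
  have h₁₂ := hφ.apply_ne_s17 hax hxb hab
  have h₂₃ := hφ.apply_ne_s17 hxb hby hxy
  have h₃₄ := hφ.apply_ne_s17 hby hya hab.symm
  simp [h₁, h₂, h₁₂, h₁₄, h₂₃, h₃₄]

theorem exists_rainbow_four_cycle_of_four_le_encard (hφ : IsProperEdgeColoring G φ) {a b : V}
    (hab : a ≠ b) (h : 4 ≤ (G.commonNeighbors a b).encard) :
    ∃ (u : V) (c : G.Walk u u), c.IsCycle ∧ c.length = 4 ∧ (c.edges.map φ).Nodup := by
  obtain ⟨x, hx⟩ : (G.commonNeighbors a b).Nonempty :=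
    Set.encard_pos.mp (lt_of_lt_of_le (by norm_num) h)
  suffices ∃ y ∈ G.commonNeighbors a b \ {x}, φ s(a, x) ≠ φ s(b, y) ∧ φ s(x, b) ≠ φ s(y, a) by
    obtain ⟨y, ⟨⟨hay, hby⟩, hyx⟩, h₁, h₂⟩ := this
    exact hφ.exists_rainbow_four_cycle_of_ne hx.1 hx.2.symm hby hay.symm hab (Ne.symm hyx) h₁ h₂
  by_contra! hbad
  have hsub : G.commonNeighbors a b \ {x} ⊆
      {y | G.Adj b y ∧ φ s(b, y) = φ s(a, x)} ∪ {y | G.Adj a y ∧ φ s(a, y) = φ s(b, x)} := by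
    intro y hy
    by_cases h₁ : φ s(a, x) = φ s(b, y)
    · exact Or.inl ⟨hy.1.2, h₁.symm⟩
    · exact Or.inr ⟨hy.1.1, by rw [Sym2.eq_swap, ← hbad y hy h₁, Sym2.eq_swap]⟩
  have hle_one := fun v c ↦
    Set.encard_le_one_iff_subsingleton.mpr (hφ.subsingleton_setOf_adj_apply_eq v c)
  have hcard : (G.commonNeighbors a b \ {x}).encard ≤ 1 + 1 :=
    (Set.encard_le_encard hsub).trans <|
      (Set.encard_union_le _ _).trans (add_le_add (hle_one _ _) (hle_one _ _))
  rw [← Set.encard_sdiff_singleton_add_one hx] at h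
  have := h.trans (add_le_add hcard le_rfl)
  norm_num at this

end IsProperEdgeColoring

/-- For every `n ≥ 4`, the complete bipartite graph `K_{2,n}` is PRCF-bad: every
proper edge coloring contains a rainbow 4-cycle. -/
theorem completeBipartite_two_n_PRCF_bad (n : ℕ) (hn : 4 ≤ n) :
    ∀ {C : Type v} (φ : Sym2 (Fin 2 ⊕ Fin n) → C),
      IsProperEdgeColoring (completeBipartiteGraph (Fin 2) (Fin n)) φ →
      ∃ (u : Fin 2 ⊕ Fin n) (c : (completeBipartiteGraph (Fin 2) (Fin n)).Walk u u),
        c.IsCycle ∧ c.length = 4 ∧ (c.edges.map φ).Nodup := by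
  intro C φ hφ
  refine hφ.exists_rainbow_four_cycle_of_four_le_encard (a := .inl 0) (b := .inl 1) (by simp) ?_
  rw [commonNeighbors_inl_completeBipartiteGraph, ← Set.image_univ,
    Sum.inr_injective.encard_image, Set.encard_univ, ENat.card_eq_coe_fintype_card,
    Fintype.card_fin]
  exact_mod_cast hn
end

section
/- Let G be an r-regular simple graph with girth g satisfying r ≤ g − 2. Then G is PRCF-good: since by Vizing's theorem G has a proper edge coloring with at most r + 1 ≤ g − 1 colors, any such coloring uses fewer colors than the length of any cycle of G, so no cycle is rainbow. -/
open SimpleGraph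

/-!
By Vizing's theorem `G` has a proper edge coloring with `maxDegree G + 1 ≤ r + 1` colors, while
every cycle of `G` has at least `r + 2` edges, so two edges of a cycle share a color.

Vizing's theorem is proved by coloring the edges one at a time, through proper partial
colorings in which every vertex misses some color. To color `x y₀`, grow a fan
`y₀, y₁, …, y_k` of neighbours of `x` in which the color of `x yᵢ₊₁` is missing at `yᵢ`.
Shifting colors down the fan moves the uncolored edge to `x yᵢ` for any `i`, and it can be
colored as soon as some color is missing at both ends. If the fan gets stuck, a color `β`
missing at the tip is missing at an earlier `yⱼ` too, and swapping `α` and `β` (with `α` missing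
at `x`) on a suitable `α/β` path frees a common color: such a path has only two ends, so it
cannot join `x`, `yⱼ` and the tip.
-/

open Function Finset

namespace SimpleGraph

theorem Connected.sum_two_sub_degree_le_two {W : Type*} [Fintype W] {H : SimpleGraph W}
    [DecidableRel H.Adj] (hH : H.Connected) : ∑ v, (2 - (H.degree v : ℤ)) ≤ 2 := by
  have hcard := hH.card_vert_le_card_edgeSet_add_one
  rw [Nat.card_eq_fintype_card, Nat.card_eq_fintype_card, ← edgeFinset_card] at hcard
  have hsum := H.sum_degrees_eq_twice_card_edges
  rw [sum_sub_distrib, ← Nat.cast_sum, hsum]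
  simp only [sum_const, card_univ, nsmul_eq_mul]
  push_cast
  omega

theorem Reachable.not_reachable_of_degree_le_one {V : Type*} [Fintype V] {K : SimpleGraph V}
    [DecidableRel K.Adj] (hdeg : ∀ v, K.degree v ≤ 2) {a b c : V} (hab : a ≠ b) (hac : a ≠ c)
    (hbc : b ≠ c) (ha : K.degree a ≤ 1) (hb : K.degree b ≤ 1) (hc : K.degree c ≤ 1)
    (hrb : K.Reachable a b) : ¬K.Reachable a c := by
  classical
  intro hrc
  set S := K.connectedComponentMk a
  have hmem : ∀ {v}, K.Reachable a v → v ∈ S := fun h => ConnectedComponent.eq.mpr h.symm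
  have hsum : ∑ v : S, (2 - (K.degree v : ℤ)) ≤ 2 := by
    convert S.connected_toSimpleGraph.sum_two_sub_degree_le_two using 4 with v
    convert (degree_induce_of_neighborSet_subset fun _ hw =>
      S.mem_supp_of_adj_mem_supp v.2 hw).symm using 2
    all_goals rfl
  set T : Finset S := {⟨a, hmem .rfl⟩, ⟨b, hmem hrb⟩, ⟨c, hmem hrc⟩}
  have hT : T.card = 3 := by
    rw [card_insert_of_notMem, card_pair] <;> simp [*]
  have hT_le : T.card • (1 : ℤ) ≤ ∑ v ∈ T, (2 - (K.degree v : ℤ)) := by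
    refine card_nsmul_le_sum T _ 1 ?_
    simp only [T, mem_insert, mem_singleton]
    rintro v (rfl | rfl | rfl) <;> dsimp only <;> omega
  have hT_sum : ∑ v ∈ T, (2 - (K.degree v : ℤ)) ≤ ∑ v : S, (2 - (K.degree v : ℤ)) :=
    sum_le_sum_of_subset_of_nonneg (subset_univ T) fun v _ _ => by linarith [hdeg v]
  rw [hT, nsmul_eq_mul, Nat.cast_ofNat, mul_one] at hT_le
  linarith

end SimpleGraph

namespace Vizing

variable {V C : Type*} {G : SimpleGraph V} {φ : Sym2 V → Option C} {e : Sym2 V}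
  {x y₀ y₁ v w w₀ : V} {c α β γ : C}

/-- A proper partial edge coloring: `φ e = none` means that `e` is not colored yet. -/
def IsProper (G : SimpleGraph V) (φ : Sym2 V → Option C) : Prop :=
  ∀ ⦃v a b : V⦄ ⦃c : C⦄, G.Adj v a → G.Adj v b → φ s(v, a) = some c → φ s(v, b) = some c → a = b

def IsMissing (G : SimpleGraph V) (φ : Sym2 V → Option C) (v : V) (c : C) : Prop :=
  ∀ ⦃w⦄, G.Adj v w → φ s(v, w) ≠ some c

theorem exists_isMissing [Fintype C] [Fintype (G.neighborSet v)] (φ : Sym2 V → Option C)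
    (h : G.degree v < Fintype.card C) : ∃ c, IsMissing G φ v c := by
  classical
  obtain ⟨_, hc, hnot⟩ := exists_mem_notMem_of_card_lt_card
    (s := (G.neighborFinset v).image fun w => φ s(v, w)) (t := univ.map .some)
    (by simpa using card_image_le.trans_lt h)
  obtain ⟨c, -, rfl⟩ := mem_map.mp hc
  exact ⟨c, fun w hw hwc => hnot (mem_image.mpr ⟨w, (G.mem_neighborFinset v w).mpr hw, hwc⟩)⟩

theorem eq_some_of_update_none [DecidableEq V] {e' : Sym2 V} (h : update φ e none e' = some c) :
    φ e' = some c := by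
  by_cases he : e' = e
  · simp [he] at h
  · rwa [update_of_ne he] at h

theorem IsProper.update_none [DecidableEq V] (hφ : IsProper G φ) (e : Sym2 V) :
    IsProper G (update φ e none) :=
  fun _ _ _ _ ha hb h₁ h₂ => hφ ha hb (eq_some_of_update_none h₁) (eq_some_of_update_none h₂)

theorem IsMissing.update_none [DecidableEq V] (h : IsMissing G φ v c) (e : Sym2 V) :
    IsMissing G (update φ e none) v c :=
  fun _ hw hc => h hw (eq_some_of_update_none hc)

theorem IsProper.update_some [DecidableEq V] (hφ : IsProper G φ) (hv : IsMissing G φ v c)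
    (hw : IsMissing G φ w c) : IsProper G (update φ s(v, w) (some c)) := by
  have hend : ∀ ⦃a b⦄, a ∈ s(v, w) → G.Adj a b → φ s(a, b) ≠ some c := by
    intro a b ha hab
    rcases Sym2.mem_iff.mp ha with rfl | rfl
    exacts [hv hab, hw hab]
  intro a b₁ b₂ c' h₁ h₂ e₁ e₂
  by_cases q₁ : s(a, b₁) = s(v, w) <;> by_cases q₂ : s(a, b₂) = s(v, w)
  · exact Sym2.congr_right.mp (q₁.trans q₂.symm)
  · rw [q₁, update_self, Option.some_inj] at e₁
    rw [update_of_ne q₂, ← e₁] at e₂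
    exact absurd e₂ (hend (q₁ ▸ Sym2.mem_mk_left a b₁) h₂)
  · rw [q₂, update_self, Option.some_inj] at e₂
    rw [update_of_ne q₁, ← e₂] at e₁
    exact absurd e₁ (hend (q₂ ▸ Sym2.mem_mk_left a b₂) h₁)
  · rw [update_of_ne q₁] at e₁
    rw [update_of_ne q₂] at e₂
    exact hφ h₁ h₂ e₁ e₂

def kempeGraph (G : SimpleGraph V) (φ : Sym2 V → Option C) (α β : C) : SimpleGraph V where
  Adj a b := G.Adj a b ∧ (φ s(a, b) = some α ∨ φ s(a, b) = some β)
  symm := ⟨fun a _ h => ⟨h.1.symm, Sym2.eq_swap (a := a) ▸ h.2⟩⟩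
  loopless := ⟨fun a h => G.loopless.irrefl a h.1⟩

theorem degree_kempeGraph_le_card (hφ : IsProper G φ)
    [Fintype ((kempeGraph G φ α β).neighborSet v)] {s : Finset C}
    (hs : ∀ w, (kempeGraph G φ α β).Adj v w → ∃ c ∈ s, φ s(v, w) = some c) :
    (kempeGraph G φ α β).degree v ≤ s.card := by
  rw [← card_neighborFinset_eq_degree]
  refine card_le_card_of_injOn (fun w => (φ s(v, w)).getD α) (fun w hw => ?_) ?_
  · obtain ⟨c, hc, hwc⟩ := hs w ((mem_neighborFinset _ _ _).mp hw)
    simpa [hwc] using hc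
  · intro w₁ hw₁ w₂ hw₂ h
    have hw₁ := (mem_neighborFinset _ _ _).mp hw₁
    have hw₂ := (mem_neighborFinset _ _ _).mp hw₂
    obtain ⟨c₁, -, h₁⟩ := hs w₁ hw₁
    obtain ⟨c₂, -, h₂⟩ := hs w₂ hw₂
    simp only [h₁, h₂, Option.getD_some] at h
    exact hφ hw₁.1 hw₂.1 h₁ (h ▸ h₂)

theorem degree_kempeGraph_le_two [DecidableEq C] (hφ : IsProper G φ)
    [Fintype ((kempeGraph G φ α β).neighborSet v)] : (kempeGraph G φ α β).degree v ≤ 2 :=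
  (degree_kempeGraph_le_card hφ (s := {α, β}) fun _ hw => by
    rcases hw.2 with h | h <;> simp [h]).trans card_le_two

theorem degree_kempeGraph_le_one (hφ : IsProper G φ)
    [Fintype ((kempeGraph G φ α β).neighborSet v)]
    (hv : IsMissing G φ v α ∨ IsMissing G φ v β) : (kempeGraph G φ α β).degree v ≤ 1 := by
  rcases hv with hv | hv
  · refine (degree_kempeGraph_le_card hφ (s := {β}) fun w hw => ?_).trans (card_singleton β).le
    exact ⟨β, mem_singleton_self β, hw.2.resolve_left (hv hw.1)⟩
  · refine (degree_kempeGraph_le_card hφ (s := {α}) fun w hw => ?_).trans (card_singleton α).le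
    exact ⟨α, mem_singleton_self α, hw.2.resolve_right (hv hw.1)⟩

section Kempe

variable [DecidableEq C]

open Classical in
/-- Exchanges `α` and `β` on the Kempe chain through `w₀`. The swap is applied to every edge
meeting the chain: an edge leaving the chain is colored neither `α` nor `β`, so it is fixed. -/
noncomputable def kempeSwap (G : SimpleGraph V) (φ : Sym2 V → Option C) (α β : C) (w₀ : V) :
    Sym2 V → Option C := fun e =>
  if ∃ u ∈ e, (kempeGraph G φ α β).Reachable w₀ u then (φ e).map (Equiv.swap α β) else φ e

theorem kempeSwap_of_reachable (hv : (kempeGraph G φ α β).Reachable w₀ v) (w : V) :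
    kempeSwap G φ α β w₀ s(v, w) = (φ s(v, w)).map (Equiv.swap α β) :=
  if_pos ⟨v, Sym2.mem_mk_left v w, hv⟩

theorem kempeSwap_of_not_reachable (hv : ¬(kempeGraph G φ α β).Reachable w₀ v)
    (hvw : G.Adj v w) : kempeSwap G φ α β w₀ s(v, w) = φ s(v, w) := by
  unfold kempeSwap
  split_ifs with h
  · obtain ⟨u, hu, hwu⟩ := h
    rcases Sym2.mem_iff.mp hu with rfl | rfl
    · exact absurd hwu hv
    have hcol : φ s(v, u) ≠ some α ∧ φ s(v, u) ≠ some β := by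
      rw [← not_or]
      exact fun hc => hv (hwu.trans (Adj.reachable ⟨hvw.symm, Sym2.eq_swap (a := v) ▸ hc⟩))
    cases hφ : φ s(v, u) with
    | none => rfl
    | some c =>
      rw [hφ, Ne, Option.some_inj, Ne, Option.some_inj] at hcol
      simp [Equiv.swap_apply_of_ne_of_ne hcol.1 hcol.2]
  · rfl

theorem isSome_kempeSwap (e : Sym2 V) :
    (kempeSwap G φ α β w₀ e).isSome = (φ e).isSome := by
  unfold kempeSwap
  split_ifs <;> simp

theorem IsProper.kempeSwap (hφ : IsProper G φ) : IsProper G (kempeSwap G φ α β w₀) := by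
  intro v a b c ha hb h₁ h₂
  by_cases hv : (kempeGraph G φ α β).Reachable w₀ v
  · rw [kempeSwap_of_reachable hv] at h₁ h₂
    obtain ⟨c', h₁', rfl⟩ := Option.map_eq_some_iff.mp h₁
    obtain ⟨c'', h₂', hc⟩ := Option.map_eq_some_iff.mp h₂
    rw [(Equiv.injective _) hc] at h₂'
    exact hφ ha hb h₁' h₂'
  · rw [kempeSwap_of_not_reachable hv ha] at h₁
    rw [kempeSwap_of_not_reachable hv hb] at h₂
    exact hφ ha hb h₁ h₂

theorem IsMissing.kempeSwap_of_reachable (h : IsMissing G φ v c)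
    (hv : (kempeGraph G φ α β).Reachable w₀ v) :
    IsMissing G (kempeSwap G φ α β w₀) v (Equiv.swap α β c) := by
  intro w hw hc
  rw [Vizing.kempeSwap_of_reachable hv, Option.map_eq_some_iff] at hc
  obtain ⟨c', hc', hcc⟩ := hc
  exact h hw ((Equiv.injective _ hcc) ▸ hc')

theorem IsMissing.kempeSwap_of_not_reachable (h : IsMissing G φ v c)
    (hv : ¬(kempeGraph G φ α β).Reachable w₀ v) : IsMissing G (kempeSwap G φ α β w₀) v c :=
  fun _ hw hc => h hw (by rwa [Vizing.kempeSwap_of_not_reachable hv hw] at hc)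

theorem IsMissing.kempeSwap_of_ne (h : IsMissing G φ v c) (hα : c ≠ α) (hβ : c ≠ β) :
    IsMissing G (kempeSwap G φ α β w₀) v c := by
  by_cases hv : (kempeGraph G φ α β).Reachable w₀ v
  · simpa [Equiv.swap_apply_of_ne_of_ne hα hβ] using h.kempeSwap_of_reachable hv
  · exact h.kempeSwap_of_not_reachable hv

end Kempe

structure IsFan (G : SimpleGraph V) (φ : Sym2 V → Option C) (x : V) (y : ℕ → V) (k : ℕ) :
    Prop where
  adj : ∀ i ≤ k, G.Adj x (y i)
  ne : ∀ i j, i < j → j ≤ k → y i ≠ y j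
  uncolored : φ s(x, y 0) = none
  step : ∀ i < k, ∃ c, φ s(x, y (i + 1)) = some c ∧ IsMissing G φ (y i) c

variable {y : ℕ → V} {i j k : ℕ}

theorem isFan_zero (hxy : G.Adj x (y 0)) (hnone : φ s(x, y 0) = none) : IsFan G φ x y 0 where
  adj i hi := by rwa [Nat.le_zero.mp hi]
  ne i j hij hj := by omega
  uncolored := hnone
  step i hi := by omega

theorem IsFan.succ (hF : IsFan G φ x y k) (hadj : G.Adj x (y (k + 1)))
    (hne : ∀ i ≤ k, y i ≠ y (k + 1)) (hc : φ s(x, y (k + 1)) = some c)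
    (hm : IsMissing G φ (y k) c) : IsFan G φ x y (k + 1) where
  adj i hi := (Nat.le_succ_iff.mp hi).elim (hF.adj i) fun h => h ▸ hadj
  ne i j hij hj := (Nat.le_succ_iff.mp hj).elim (hF.ne i j hij) fun h => h ▸ hne i (by omega)
  uncolored := hF.uncolored
  step i hi := (Nat.lt_succ_iff_lt_or_eq.mp hi).elim (hF.step i) fun h => h ▸ ⟨c, hc, hm⟩

theorem IsFan.of_le (hF : IsFan G φ x y k) (hjk : j ≤ k) : IsFan G φ x y j where
  adj i hi := hF.adj i (hi.trans hjk)
  ne i i' hii' hi' := hF.ne i i' hii' (hi'.trans hjk)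
  uncolored := hF.uncolored
  step i hi := hF.step i (hi.trans_le hjk)

theorem IsFan.eq_of_apply_eq (hF : IsFan G φ x y k) (hi : i ≤ k) (hj : j ≤ k) (h : y i = y j) :
    i = j := by
  rcases lt_trichotomy i j with hij | hij | hij
  · exact absurd h (hF.ne i j hij hj)
  · exact hij
  · exact absurd h.symm (hF.ne j i hij hi)

theorem IsFan.lt_card [Finite V] (hF : IsFan G φ x y k) : k < Nat.card V := by
  have hinj : Injective fun i : Fin (k + 1) => y i :=
    fun i j h => Fin.ext (hF.eq_of_apply_eq (by omega) (by omega) h)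
  simpa using Nat.card_le_card_of_injective _ hinj

theorem IsFan.eq_of_color_eq (hφ : IsProper G φ) (hF : IsFan G φ x y k) (hi : i < k)
    (hj : j < k) (hci : φ s(x, y (i + 1)) = some c) (hcj : φ s(x, y (j + 1)) = some c) :
    i = j :=
  Nat.succ_injective (hF.eq_of_apply_eq hi hj (hφ (hF.adj _ hi) (hF.adj _ hj) hci hcj))

section Shift

variable [DecidableEq V]

def shift (φ : Sym2 V → Option C) (x y₀ y₁ : V) : Sym2 V → Option C :=
  update (update φ s(x, y₁) none) s(x, y₀) (φ s(x, y₁))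

theorem shift_apply_left (y₀ y₁ : V) : shift φ x y₀ y₁ s(x, y₀) = φ s(x, y₁) :=
  update_self ..

theorem shift_apply_right (h : y₀ ≠ y₁) : shift φ x y₀ y₁ s(x, y₁) = none := by
  rw [shift, update_of_ne (mt Sym2.congr_right.mp h.symm), update_self]

theorem shift_apply_of_ne (h₀ : e ≠ s(x, y₀)) (h₁ : e ≠ s(x, y₁)) :
    shift φ x y₀ y₁ e = φ e := by
  rw [shift, update_of_ne h₀, update_of_ne h₁]

theorem IsProper.shift (hφ : IsProper G φ) (hadj : G.Adj x y₁)
    (hc : φ s(x, y₁) = some c) (hm : IsMissing G φ y₀ c) : IsProper G (shift φ x y₀ y₁) := by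
  rw [Vizing.shift, hc]
  refine (hφ.update_none _).update_some (fun w hw hwc => ?_) (hm.update_none _)
  have hw₁ : w = y₁ := hφ hw hadj (eq_some_of_update_none hwc) hc
  simp [hw₁] at hwc

theorem IsMissing.shift_of_ne (h : IsMissing G φ v c) (hvx : v ≠ x) (hvy : v ≠ y₀) :
    IsMissing G (shift φ x y₀ y₁) v c := by
  intro w hw hc
  have hne : s(v, w) ≠ s(x, y₀) := fun he => by
    rcases Sym2.mem_iff.mp (he ▸ Sym2.mem_mk_left v w) with rfl | rfl <;> contradiction
  exact h hw (eq_some_of_update_none (by rwa [Vizing.shift, update_of_ne hne] at hc))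

theorem IsMissing.shift_self (h : IsMissing G φ x c) (hadj : G.Adj x y₁) :
    IsMissing G (shift φ x y₀ y₁) x c := by
  intro w hw hc
  by_cases hw₀ : w = y₀
  · rw [hw₀, shift_apply_left] at hc
    exact h hadj hc
  · have hne : s(x, w) ≠ s(x, y₀) := mt Sym2.congr_right.mp hw₀
    exact h hw (eq_some_of_update_none (by rwa [Vizing.shift, update_of_ne hne] at hc))

theorem IsFan.shift (hF : IsFan G φ x y (k + 1)) :
    IsFan G (shift φ x (y 0) (y 1)) x (fun i => y (i + 1)) k where
  adj i hi := hF.adj (i + 1) (by omega)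
  ne i j hij hj := hF.ne (i + 1) (j + 1) (by omega) (by omega)
  uncolored := shift_apply_right (hF.ne 0 1 one_pos (by omega))
  step i hi := by
    obtain ⟨c, hc, hm⟩ := hF.step (i + 1) (by omega)
    refine ⟨c, ?_,
      hm.shift_of_ne (hF.adj _ (by omega)).ne.symm (hF.ne 0 _ (by omega) (by omega)).symm⟩
    rwa [shift_apply_of_ne (mt Sym2.congr_right.mp (hF.ne 0 (i + 2) (by omega) (by omega)).symm)
      (mt Sym2.congr_right.mp (hF.ne 1 (i + 2) (by omega) (by omega)).symm)]

end Shift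

structure IsProperExtension (G : SimpleGraph V) (φ ψ : Sym2 V → Option C) (e : Sym2 V) :
    Prop where
  isProper : IsProper G ψ
  isSome_of_isSome : ∀ e', (φ e').isSome → (ψ e').isSome
  isSome : (ψ e).isSome

theorem IsFan.exists_extension (hφ : IsProper G φ) (hF : IsFan G φ x y k)
    (hx : IsMissing G φ x γ) (hk : IsMissing G φ (y k) γ) :
    ∃ ψ, IsProperExtension G φ ψ s(x, y 0) := by
  classical
  induction k generalizing φ y with
  | zero =>
    refine ⟨update φ s(x, y 0) (some γ), hφ.update_some hx hk, fun e he => ?_, by simp⟩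
    by_cases h : e = s(x, y 0) <;> simp [h, he]
  | succ k ih =>
    obtain ⟨c, hc, hm⟩ := hF.step 0 k.succ_pos
    have hadj₁ := hF.adj 1 (by omega)
    have hne : y 0 ≠ y 1 := hF.ne 0 1 one_pos (by omega)
    obtain ⟨ψ, hψ, hsupp, hψ₁⟩ := ih (hφ.shift hadj₁ hc hm) hF.shift (hx.shift_self hadj₁)
      (hk.shift_of_ne (hF.adj _ le_rfl).ne.symm (hF.ne 0 _ (by omega) le_rfl).symm)
    refine ⟨ψ, hψ, fun e he => ?_, hsupp _ (by simp [shift_apply_left, hc])⟩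
    by_cases h₁ : e = s(x, y 1)
    · exact h₁ ▸ hψ₁
    by_cases h₀ : e = s(x, y 0)
    · exact hsupp _ (by simp [h₀, shift_apply_left, hc])
    · exact hsupp _ (by rwa [shift_apply_of_ne h₀ h₁])

theorem IsProperExtension.of_kempeSwap [DecidableEq C] {ψ : Sym2 V → Option C}
    (h : IsProperExtension G (kempeSwap G φ α β w₀) ψ e) : IsProperExtension G φ ψ e :=
  ⟨h.isProper, fun e' he' => h.isSome_of_isSome e' (by rwa [isSome_kempeSwap]), h.isSome⟩

theorem IsFan.kempeSwap [DecidableEq C] (hF : IsFan G φ x y k)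
    (hx : ¬(kempeGraph G φ α β).Reachable w₀ x) (hα : IsMissing G φ x α)
    (hβ : ∀ i < k, φ s(x, y (i + 1)) = some β → ¬(kempeGraph G φ α β).Reachable w₀ (y i)) :
    IsFan G (kempeSwap G φ α β w₀) x y k where
  adj := hF.adj
  ne := hF.ne
  uncolored := by rw [kempeSwap_of_not_reachable hx (hF.adj 0 k.zero_le), hF.uncolored]
  step i hi := by
    obtain ⟨c, hc, hm⟩ := hF.step i hi
    refine ⟨c, by rwa [kempeSwap_of_not_reachable hx (hF.adj _ hi)], ?_⟩
    have hcα : c ≠ α := by rintro rfl; exact hα (hF.adj _ hi) hc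
    by_cases hcβ : c = β
    · exact hm.kempeSwap_of_not_reachable (hβ i hi (hcβ ▸ hc))
    · exact hm.kempeSwap_of_ne hcα hcβ

/-- The `α/β` Kempe chain through `x` has at most two ends, so it misses `y j` or `y k`.
Swapping the chain through that vertex frees `α` there and keeps the fan up to it. -/
theorem IsFan.exists_extension_of_conflict [Finite V] (hφ : IsProper G φ)
    (hF : IsFan G φ x y k) (hα : IsMissing G φ x α) (hjk : j < k)
    (hj : IsMissing G φ (y j) β) (hk : IsMissing G φ (y k) β)
    (hxβ : φ s(x, y (j + 1)) = some β) : ∃ ψ, IsProperExtension G φ ψ s(x, y 0) := by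
  classical
  have := Fintype.ofFinite V
  set K := kempeGraph G φ α β
  have hαβ : α ≠ β := by rintro rfl; exact hα (hF.adj _ hjk) hxβ
  have hβ_eq : ∀ i < k, φ s(x, y (i + 1)) = some β → i = j :=
    fun i hi h => hF.eq_of_color_eq hφ hi hjk h hxβ
  have hdeg (v : V) : K.degree v ≤ 2 := degree_kempeGraph_le_two hφ
  have hx₁ : K.degree x ≤ 1 := degree_kempeGraph_le_one hφ (.inl hα)
  have hj₁ : K.degree (y j) ≤ 1 := degree_kempeGraph_le_one hφ (.inr hj)
  have hk₁ : K.degree (y k) ≤ 1 := degree_kempeGraph_le_one hφ (.inr hk)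
  by_cases hjx : K.Reachable (y j) x
  · have hkx : ¬K.Reachable (y k) x := fun hkx =>
      hjx.symm.not_reachable_of_degree_le_one hdeg (hF.adj j hjk.le).ne (hF.adj k le_rfl).ne
        (hF.ne j k hjk le_rfl) hx₁ hj₁ hk₁ hkx.symm
    have hkj : ¬K.Reachable (y k) (y j) := fun h => hkx (h.trans hjx)
    have hF' := hF.kempeSwap hkx hα fun i hi h => hβ_eq i hi h ▸ hkj
    obtain ⟨ψ, hψ⟩ := hF'.exists_extension hφ.kempeSwap (hα.kempeSwap_of_not_reachable hkx)
      (by simpa using hk.kempeSwap_of_reachable (Reachable.refl (G := K) (y k)))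
    exact ⟨ψ, hψ.of_kempeSwap⟩
  · have hF' := (hF.of_le hjk.le).kempeSwap hjx hα fun i hi h => absurd (hβ_eq i (by omega) h) hi.ne
    obtain ⟨ψ, hψ⟩ := hF'.exists_extension hφ.kempeSwap (hα.kempeSwap_of_not_reachable hjx)
      (by simpa using hj.kempeSwap_of_reachable (Reachable.refl (G := K) (y j)))
    exact ⟨ψ, hψ.of_kempeSwap⟩

/-- From each tip `y i`, follow the edge at `x` colored by a fixed missing color `m (y i)`, as
long as this gives a fan. When it stops, `m (y k)` is missing at `x`, or it colors an earlier fan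
edge `x (y (j + 1))` and is then missing at `y j` too. -/
theorem exists_fan [Finite V] (hmiss : ∀ v, ∃ c, IsMissing G φ v c)
    {y₀ : V} (hxy : G.Adj x y₀) (hnone : φ s(x, y₀) = none) :
    ∃ y k, y 0 = y₀ ∧ IsFan G φ x y k ∧ ∃ β, IsMissing G φ (y k) β ∧ (IsMissing G φ x β ∨
      ∃ j < k, IsMissing G φ (y j) β ∧ φ s(x, y (j + 1)) = some β) := by
  classical
  choose m hm using hmiss
  let next (u : V) : V :=
    if h : ∃ w, G.Adj x w ∧ φ s(x, w) = some (m u) then h.choose else u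
  have hnext {u} (hu : ¬IsMissing G φ x (m u)) :
      G.Adj x (next u) ∧ φ s(x, next u) = some (m u) := by
    have h : ∃ w, G.Adj x w ∧ φ s(x, w) = some (m u) := by
      simpa [IsMissing] using hu
    simpa only [next, dif_pos h] using h.choose_spec
  set y : ℕ → V := fun i => next^[i] y₀
  have hy (i : ℕ) : y (i + 1) = next (y i) := iterate_succ_apply' ..
  have hfail : ∃ n, ¬IsFan G φ x y n := ⟨Nat.card V, fun hF => hF.lt_card.false⟩
  obtain ⟨k, hk⟩ : ∃ k, Nat.find hfail = k + 1 :=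
    Nat.exists_eq_succ_of_ne_zero fun h0 => (Nat.find_spec hfail) (h0 ▸ isFan_zero hxy hnone)
  have hF : IsFan G φ x y k := not_not.mp (Nat.find_min hfail (by omega))
  have hF' : ¬IsFan G φ x y (k + 1) := hk ▸ Nat.find_spec hfail
  refine ⟨y, k, rfl, hF, m (y k), hm _, or_iff_not_imp_left.mpr fun hxk => ?_⟩
  obtain ⟨hadj, hcol⟩ := hnext hxk
  rw [← hy] at hadj hcol
  obtain ⟨i, hik, hi⟩ : ∃ i ≤ k, y i = y (k + 1) := by
    by_contra! hne
    exact hF' (hF.succ hadj hne hcol (hm _))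
  obtain ⟨j, rfl⟩ : ∃ j, i = j + 1 := Nat.exists_eq_succ_of_ne_zero fun h0 => by
    simp [← hi, h0, hF.uncolored] at hcol
  obtain ⟨c, hc, hjc⟩ := hF.step j hik
  rw [hi, hcol, Option.some_inj] at hc
  exact ⟨j, hik, hc ▸ hjc, hi ▸ hcol⟩

theorem exists_extension [Finite V] (hφ : IsProper G φ) (hmiss : ∀ v, ∃ c, IsMissing G φ v c)
    {y₀ : V} (hxy : G.Adj x y₀) (hnone : φ s(x, y₀) = none) :
    ∃ ψ, IsProperExtension G φ ψ s(x, y₀) := by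
  obtain ⟨α, hα⟩ := hmiss x
  obtain ⟨y, k, rfl, hF, β, hk, hxβ | ⟨j, hjk, hj, hβ⟩⟩ := exists_fan hmiss hxy hnone
  · exact hF.exists_extension hφ hxβ hk
  · exact hF.exists_extension_of_conflict hφ hα hjk hj hk hβ

theorem IsProper.isProperEdgeColoring (hφ : IsProper G φ)
    (hall : ∀ e ∈ G.edgeSet, (φ e).isSome) (c₀ : C) :
    IsProperEdgeColoring G fun e => (φ e).getD c₀ := by
  rintro _ _ h₁ h₂ hne ⟨v, hv₁, hv₂⟩ heq
  obtain ⟨a, rfl⟩ := Sym2.mem_iff_exists.mp hv₁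
  obtain ⟨b, rfl⟩ := Sym2.mem_iff_exists.mp hv₂
  obtain ⟨c₁, hc₁⟩ := Option.isSome_iff_exists.mp (hall _ h₁)
  obtain ⟨c₂, hc₂⟩ := Option.isSome_iff_exists.mp (hall _ h₂)
  simp only [hc₁, hc₂, Option.getD_some] at heq
  exact hne (congrArg _ (hφ h₁ h₂ hc₁ (heq ▸ hc₂)))

theorem IsProper.exists_forall_isSome [Finite V]
    (hmiss : ∀ v (φ : Sym2 V → Option C), ∃ c, IsMissing G φ v c) (hφ : IsProper G φ) :
    ∃ ψ : Sym2 V → Option C, IsProper G ψ ∧ ∀ e ∈ G.edgeSet, (ψ e).isSome := by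
  induction h : {e ∈ G.edgeSet | φ e = none}.ncard using Nat.strong_induction_on
    generalizing φ with
  | _ n ih =>
  by_cases hall : ∀ e ∈ G.edgeSet, (φ e).isSome
  · exact ⟨φ, hφ, hall⟩
  obtain ⟨e, he, hnone⟩ : ∃ e ∈ G.edgeSet, φ e = none := by simpa using hall
  induction e using Sym2.ind with
  | _ x y =>
  obtain ⟨ψ, hψ⟩ := exists_extension hφ (hmiss · φ) he hnone
  have hlt : {e ∈ G.edgeSet | ψ e = none} ⊂ {e ∈ G.edgeSet | φ e = none} := by
    refine (Set.ssubset_iff_of_subset ?_).mpr ⟨s(x, y), ⟨he, hnone⟩, fun h => ?_⟩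
    · rintro e' ⟨he', h'⟩
      refine ⟨he', Option.not_isSome_iff_eq_none.mp fun h'' => ?_⟩
      simpa [h'] using hψ.isSome_of_isSome e' h''
    · simpa [h.2] using hψ.isSome
  exact ih _ (h ▸ Set.ncard_lt_ncard hlt (Set.toFinite _)) hψ.isProper rfl

end Vizing

theorem SimpleGraph.exists_isProperEdgeColoring {V C : Type*} [Fintype V] (G : SimpleGraph V)
    [DecidableRel G.Adj] [Fintype C] [Nonempty C] (hC : G.maxDegree < Fintype.card C) :
    ∃ φ : Sym2 V → C, IsProperEdgeColoring G φ := by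
  obtain ⟨φ, hφ, hall⟩ := Vizing.IsProper.exists_forall_isSome (G := G) (φ := fun _ => none)
    (fun v φ => Vizing.exists_isMissing φ ((G.degree_le_maxDegree v).trans_lt hC))
    fun _ _ _ _ _ _ h => by simp at h
  exact ⟨_, hφ.isProperEdgeColoring hall (Classical.arbitrary C)⟩

theorem PRCFGood.of_card_lt_egirth {V C : Type u} [Fintype C] {G : SimpleGraph V}
    {φ : Sym2 V → C} (hφ : IsProperEdgeColoring G φ) (hC : (Fintype.card C : ℕ∞) < G.egirth) :
    PRCFGood G := by
  refine ⟨C, φ, hφ, fun u c hc hrainbow => ?_⟩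
  have hlen : c.length ≤ Fintype.card C := by
    simpa using hrainbow.length_le_card
  exact (egirth_le_length hc).not_gt (hC.trans_le' (by exact_mod_cast hlen))

/-- An `r`-regular graph whose girth `g` satisfies `r ≤ g - 2` is PRCF-good:
by Vizing's theorem it has a proper edge coloring with at most `r + 1 ≤ g - 1`
colors, so no cycle can be rainbow. -/
theorem PRCFGood_of_regular_small_degree {V : Type u} [Fintype V]
    (G : SimpleGraph V) [DecidableRel G.Adj] {r : ℕ}
    (hreg : G.IsRegularOfDegree r) (hgirth : (r : ℕ∞) + 2 ≤ G.egirth) :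
    PRCFGood G := by
  obtain ⟨φ, hφ⟩ := G.exists_isProperEdgeColoring (C := ULift.{u} (Fin (r + 1)))
    (by simpa using Nat.lt_succ_of_le (G.maxDegree_le_of_forall_degree_le r fun v => (hreg v).le))
  refine PRCFGood.of_card_lt_egirth hφ (lt_of_lt_of_le ?_ hgirth)
  simp only [Fintype.card_ulift, Fintype.card_fin, Nat.cast_add, Nat.cast_one]
  exact_mod_cast (by omega : r + 1 < r + 2)
end
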